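/- arXiv:2604.00811 — 9 statements merged into one kernel-verified Lean document; each statement's English description precedes it below -/
import Mathlib

section
/- Let (Ω,F) be a measurable space, let P0 and P1 be probability measures on it with P1 absolutely continuous with respect to P0, let r := dP1/dP0 be the Radon–Nikodym derivative and assume r is square-integrable with respect to P0. Let m0 : Ω → ℝ be square-integrable with respect to P0 and let G ⊆ F be a sub-σ-algebra. Then ∫ m0 dP1 − ∫ E_{P0}[m0 | G] dP1 = ∫ (m0 − E_{P0}[m0 | G]) · (r − E_{P0}[r | G]) dP0, where E_{P0}[· | G] denotes conditional expectation with respect to G under P0. -/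
/-!
Write `m̄ = E[m0 | G]` and `r̄ = E[r | G]`. Changing measure, the left-hand side is
`∫ r (m0 - m̄) dP0`. The residual `m0 - m̄` integrates to zero against every `G`-measurable
factor (pull-out property), in particular against `r̄`, so `r` may be replaced by `r - r̄`.
-/

open MeasureTheory

theorem integral_mul_sub_condExp_eq_zero {Ω : Type*} {m mΩ : MeasurableSpace Ω} {μ : Measure Ω}
    (hm : m ≤ mΩ) [SigmaFinite (μ.trim hm)] {f g : Ω → ℝ}
    (hg : AEStronglyMeasurable[m] g μ) (hgf : Integrable (g * f) μ) (hf : Integrable f μ) :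
    ∫ ω, g ω * (f ω - μ[f|m] ω) ∂μ = 0 := by
  have hpull : μ[g * f|m] =ᵐ[μ] g * μ[f|m] := condExp_mul_of_aestronglyMeasurable_left hg hgf hf
  have hpull_int : ∫ ω, (g * μ[f|m]) ω ∂μ = ∫ ω, (g * f) ω ∂μ :=
    (integral_congr_ae hpull).symm.trans (integral_condExp hm)
  simp_rw [mul_sub]
  exact (integral_sub hgf (integrable_condExp.congr hpull)).trans (sub_eq_zero.2 hpull_int.symm)

/-- Lemma 1 (confounding bias): for square-integrable `m0` and density ratio `r = dP1/dP0`,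
`∫ m0 dP1 − ∫ E_{P0}[m0|G] dP1 = ∫ (m0 − E_{P0}[m0|G]) (r − E_{P0}[r|G]) dP0`. -/
theorem confounding_bias_eq_integral_cond_cov
    {Ω : Type*} [mΩ : MeasurableSpace Ω] (P0 P1 : Measure Ω)
    [IsProbabilityMeasure P0] [IsProbabilityMeasure P1]
    (hac : P1 ≪ P0)
    (r : Ω → ℝ) (hr : r = fun ω => (P1.rnDeriv P0 ω).toReal)
    (hr2 : MemLp r 2 P0)
    (m0 : Ω → ℝ) (hm02 : MemLp m0 2 P0)
    (G : MeasurableSpace Ω) (hG : G ≤ mΩ) :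
    ∫ ω, m0 ω ∂P1 - ∫ ω, (P0[m0|G]) ω ∂P1
      = ∫ ω, (m0 ω - (P0[m0|G]) ω) * (r ω - (P0[r|G]) ω) ∂P0 := by
  have hmb2 : MemLp (P0[m0|G]) 2 P0 := hm02.condExp one_le_two
  have hrb2 : MemLp (P0[r|G]) 2 P0 := hr2.condExp one_le_two
  have change_of_measure (f : Ω → ℝ) : ∫ ω, f ω ∂P1 = ∫ ω, r ω * f ω ∂P0 := by
    rw [hr, integral_toReal_rnDeriv_mul hac]
  have h_rm0 : Integrable (fun ω => r ω * m0 ω) P0 := hr2.integrable_mul hm02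
  have h_rmb : Integrable (fun ω => r ω * P0[m0|G] ω) P0 := hr2.integrable_mul hmb2
  have h_rres : Integrable (fun ω => r ω * (m0 ω - P0[m0|G] ω)) P0 :=
    hr2.integrable_mul (hm02.sub hmb2)
  have h_rbres : Integrable (fun ω => P0[r|G] ω * (m0 ω - P0[m0|G] ω)) P0 :=
    hrb2.integrable_mul (hm02.sub hmb2)
  have h_orth : ∫ ω, P0[r|G] ω * (m0 ω - P0[m0|G] ω) ∂P0 = 0 :=
    integral_mul_sub_condExp_eq_zero hG stronglyMeasurable_condExp.aestronglyMeasurable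
      (hrb2.integrable_mul hm02) (hm02.integrable one_le_two)
  calc ∫ ω, m0 ω ∂P1 - ∫ ω, (P0[m0|G]) ω ∂P1
      = ∫ ω, r ω * (m0 ω - P0[m0|G] ω) ∂P0 := by
        simp_rw [change_of_measure, mul_sub]
        rw [integral_sub h_rm0 h_rmb]
    _ = ∫ ω, r ω * (m0 ω - P0[m0|G] ω) ∂P0 - ∫ ω, P0[r|G] ω * (m0 ω - P0[m0|G] ω) ∂P0 := by
        rw [h_orth, sub_zero]
    _ = ∫ ω, (m0 ω - (P0[m0|G]) ω) * (r ω - (P0[r|G]) ω) ∂P0 := by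
        rw [← integral_sub h_rres h_rbres]
        congr 1 with ω
        ring
end

section
/- Let (Ω,F) be a measurable space, let P0 and P1 be probability measures on it with P1 absolutely continuous with respect to P0, let r := dP1/dP0 be square-integrable with respect to P0, and let φ : Ω → E be a measurable map into a measurable space E. Then ∫ r² dP0 − ∫ (d(φ_*P1)/d(φ_*P0))² d(φ_*P0) = ∫ Var_{P0}(r | σ(φ)) dP0 ≥ 0, where σ(φ) is the σ-algebra generated by φ and Var_{P0}(· | σ(φ)) denotes the conditional variance under P0. In particular, the χ²-divergence between the pushforward measures φ_*P1 and φ_*P0 is at most the χ²-divergence between P1 and P0. -/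
open MeasureTheory ProbabilityTheory

/-!
The density ratio of the pushforward laws, pulled back along `φ`, is a version of the
conditional expectation `P0[r | σ(φ)]`. So the pushforward overlap divergence is the second
moment of `P0[r | σ(φ)]`, and `∫ r² - ∫ P0[r | σ(φ)]²` is the expected conditional variance.
-/

section CondVar

variable {Ω : Type*} {m m₀ : MeasurableSpace Ω} {μ : Measure[m₀] Ω} {X : Ω → ℝ}

lemma integral_condVar_eq_integral_sq_sub_integral_sq_condExp [IsFiniteMeasure μ]
    (hm : m ≤ m₀) (hX : MemLp X 2 μ) :
    ∫ ω, Var[X; μ | m] ω ∂μ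
      = ∫ ω, X ω ^ 2 ∂μ - ∫ ω, (μ[X | m]) ω ^ 2 ∂μ := by
  calc ∫ ω, Var[X; μ | m] ω ∂μ
    _ = ∫ ω, (μ[X ^ 2 | m]) ω - (μ[X | m]) ω ^ 2 ∂μ :=
      integral_congr_ae (condVar_ae_eq_condExp_sq_sub_sq_condExp hm hX)
    _ = ∫ ω, (μ[X ^ 2 | m]) ω ∂μ - ∫ ω, (μ[X | m]) ω ^ 2 ∂μ :=
      integral_sub integrable_condExp (hX.condExp one_le_two).integrable_sq
    _ = ∫ ω, X ω ^ 2 ∂μ - ∫ ω, (μ[X | m]) ω ^ 2 ∂μ := by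
      rw [integral_condExp hm]; rfl

lemma integral_condVar_nonneg : 0 ≤ ∫ ω, Var[X; μ | m] ω ∂μ :=
  integral_nonneg_of_ae (condExp_nonneg (.of_forall fun _ ↦ sq_nonneg _))

end CondVar

lemma integral_sq_toReal_rnDeriv_map {Ω E : Type*} {mΩ : MeasurableSpace Ω}
    {mE : MeasurableSpace E} {μ ν : Measure Ω} {g : Ω → E} [IsFiniteMeasure μ]
    [SigmaFinite (ν.map g)] (hμν : μ ≪ ν) (hg : Measurable g) :
    ∫ y, ((μ.map g).rnDeriv (ν.map g) y).toReal ^ 2 ∂(ν.map g)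
      = ∫ ω, (ν[fun a ↦ (μ.rnDeriv ν a).toReal | mE.comap g]) ω ^ 2 ∂ν := by
  rw [integral_map hg.aemeasurable
    ((Measure.measurable_rnDeriv _ _).ennreal_toReal.pow_const 2).aestronglyMeasurable]
  exact integral_congr_ae ((toReal_rnDeriv_map hμν hg).mono fun _ h ↦ congrArg (· ^ 2) h)

/-- Lemma 3, first part: the improvement in overlap divergence induced by a representation `φ`
equals the integrated conditional variance of the density ratio given `σ(φ)`, which is
nonnegative; in particular the χ²-divergence of the pushforward laws is at most the original
χ²-divergence. -/
theorem overlap_divergence_improvement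
    {Ω E : Type*} [MeasurableSpace Ω] [MeasurableSpace E]
    (P0 P1 : Measure Ω) [IsProbabilityMeasure P0] [IsProbabilityMeasure P1]
    (hac : P1 ≪ P0)
    (r : Ω → ℝ) (hr : r = fun ω => (P1.rnDeriv P0 ω).toReal)
    (hr2 : MemLp r 2 P0)
    (φ : Ω → E) (hφ : Measurable φ)
    (condVar : Ω → ℝ)
    (hcondVar : condVar =
      P0[fun ω =>
          (r ω - (P0[r | MeasurableSpace.comap φ ‹MeasurableSpace E›]) ω) ^ 2
        | MeasurableSpace.comap φ ‹MeasurableSpace E›]) :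
    (∫ ω, (r ω) ^ 2 ∂P0
        - ∫ y, (((P1.map φ).rnDeriv (P0.map φ) y).toReal) ^ 2 ∂(P0.map φ)
      = ∫ ω, condVar ω ∂P0) ∧
    (0 ≤ ∫ ω, condVar ω ∂P0) ∧
    (∫ y, (((P1.map φ).rnDeriv (P0.map φ) y).toReal) ^ 2 ∂(P0.map φ)
      ≤ ∫ ω, (r ω) ^ 2 ∂P0) := by
  have hcondVar' : condVar = Var[r; P0 | MeasurableSpace.comap φ ‹MeasurableSpace E›] :=
    hcondVar
  have himprovement : ∫ ω, (r ω) ^ 2 ∂P0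
      - ∫ y, (((P1.map φ).rnDeriv (P0.map φ) y).toReal) ^ 2 ∂(P0.map φ)
      = ∫ ω, condVar ω ∂P0 := by
    rw [integral_sq_toReal_rnDeriv_map hac hφ, ← hr, hcondVar',
      integral_condVar_eq_integral_sq_sub_integral_sq_condExp hφ.comap_le hr2]
  have hnonneg : 0 ≤ ∫ ω, condVar ω ∂P0 := hcondVar' ▸ integral_condVar_nonneg
  exact ⟨himprovement, hnonneg, by linarith⟩
end

section
/- Let (Ω,F) be a measurable space, let P0 and P1 be probability measures on it with P1 absolutely continuous with respect to P0, let r := dP1/dP0 be square-integrable with respect to P0, let m0 : Ω → ℝ be square-integrable with respect to P0, and let φ : Ω → E be a measurable map into a measurable space E. Then |∫ m0 dP1 − ∫ E_{P0}[m0 | σ(φ)] dP1| ≤ sqrt( ∫ Var_{P0}(m0 | σ(φ)) dP0 ) · sqrt( ∫ r² dP0 − ∫ (d(φ_*P1)/d(φ_*P0))² d(φ_*P0) ), where σ(φ) is the σ-algebra generated by φ, E_{P0}[· | σ(φ)] is conditional expectation and Var_{P0}(· | σ(φ)) conditional variance under P0, and φ_*P denotes pushforward of a measure P under φ. -/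
/-!
Changing measure writes the bias as `∫ (m₀ - E[m₀ | φ]) r dP₀`. As `m₀ - E[m₀ | φ]` is
orthogonal in `L²(P₀)` to every `σ(φ)`-measurable function, `r` may be replaced by
`r - E[r | φ]`, and Cauchy–Schwarz bounds the result. The first factor integrates to the expected
conditional variance; the second is `∫ r² - ∫ E[r | φ]²` by Pythagoras, and
`E[r | φ] = (d φ_*P₁ / d φ_*P₀) ∘ φ`, so `∫ E[r | φ]² dP₀` is the overlap divergence of `φ`.
-/

open MeasureTheory

section CauchySchwarz

variable {α : Type*} {mα : MeasurableSpace α} {μ : Measure α} {f g : α → ℝ}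

theorem abs_integral_mul_le_sqrt_mul_sqrt (hf : MemLp f 2 μ) (hg : MemLp g 2 μ) :
    |∫ x, f x * g x ∂μ| ≤ √(∫ x, f x ^ 2 ∂μ) * √(∫ x, g x ^ 2 ∂μ) := by
  have integral_abs_rpow_two (u : α → ℝ) : ∫ x, |u x| ^ (2 : ℝ) ∂μ = ∫ x, u x ^ 2 ∂μ := by
    simp_rw [Real.rpow_two, sq_abs]
  calc |∫ x, f x * g x ∂μ| ≤ ∫ x, |f x| * |g x| ∂μ := by
        simpa only [Real.norm_eq_abs, abs_mul] using
          norm_integral_le_integral_norm (μ := μ) (fun x => f x * g x)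
    _ ≤ (∫ x, |f x| ^ (2 : ℝ) ∂μ) ^ (1 / 2 : ℝ) * (∫ x, |g x| ^ (2 : ℝ) ∂μ) ^ (1 / 2 : ℝ) :=
        integral_mul_le_Lp_mul_Lq_of_nonneg .two_two (.of_forall fun _ => abs_nonneg _)
          (.of_forall fun _ => abs_nonneg _) (by rw [ENNReal.ofReal_ofNat]; exact hf.abs)
          (by rw [ENNReal.ofReal_ofNat]; exact hg.abs)
    _ = √(∫ x, f x ^ 2 ∂μ) * √(∫ x, g x ^ 2 ∂μ) := by
        rw [integral_abs_rpow_two f, integral_abs_rpow_two g, Real.sqrt_eq_rpow,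
          Real.sqrt_eq_rpow]

end CauchySchwarz

section ConditionalExpectation

variable {α : Type*} {m mα : MeasurableSpace α} {μ : Measure α} {f g h : α → ℝ}

theorem integral_condExp_mul_of_stronglyMeasurable (hm : m ≤ mα) [SigmaFinite (μ.trim hm)]
    (hh : StronglyMeasurable[m] h) (hfh : Integrable (f * h) μ) (hf : Integrable f μ) :
    ∫ x, μ[f|m] x * h x ∂μ = ∫ x, f x * h x ∂μ := by
  rw [← integral_condExp hm (f := fun x => f x * h x)]
  exact integral_congr_ae (condExp_mul_of_stronglyMeasurable_right hh hfh hf).symm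

variable [IsFiniteMeasure μ]

theorem integral_sub_condExp_mul_eq_zero (hm : m ≤ mα) (hf : MemLp f 2 μ) (hh : MemLp h 2 μ)
    (hhm : StronglyMeasurable[m] h) :
    ∫ x, (f x - μ[f|m] x) * h x ∂μ = 0 := by
  have hfh := hf.integrable_mul hh
  calc ∫ x, (f x - μ[f|m] x) * h x ∂μ = ∫ x, f x * h x ∂μ - ∫ x, μ[f|m] x * h x ∂μ := by
        simp_rw [sub_mul]; exact integral_sub hfh ((hf.condExp one_le_two).integrable_mul hh)
    _ = 0 := by
        rw [integral_condExp_mul_of_stronglyMeasurable hm hhm hfh (hf.integrable one_le_two),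
          sub_self]

theorem integral_sub_condExp_mul_sub_condExp (hm : m ≤ mα) (hf : MemLp f 2 μ)
    (hg : MemLp g 2 μ) :
    ∫ x, (f x - μ[f|m] x) * (g x - μ[g|m] x) ∂μ = ∫ x, (f x - μ[f|m] x) * g x ∂μ := by
  have hf' := hf.sub (hf.condExp (m := m) one_le_two)
  calc ∫ x, (f x - μ[f|m] x) * (g x - μ[g|m] x) ∂μ
      = ∫ x, (f x - μ[f|m] x) * g x ∂μ - ∫ x, (f x - μ[f|m] x) * μ[g|m] x ∂μ := by
        simp_rw [mul_sub]
        exact integral_sub (hf'.integrable_mul hg) (hf'.integrable_mul (hg.condExp one_le_two))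
    _ = ∫ x, (f x - μ[f|m] x) * g x ∂μ := by
        rw [integral_sub_condExp_mul_eq_zero hm hf (hg.condExp one_le_two)
          stronglyMeasurable_condExp, sub_zero]

theorem integral_sub_condExp_sq (hm : m ≤ mα) (hf : MemLp f 2 μ) :
    ∫ x, (f x - μ[f|m] x) ^ 2 ∂μ = ∫ x, f x ^ 2 ∂μ - ∫ x, μ[f|m] x ^ 2 ∂μ := by
  have hc := hf.condExp (m := m) one_le_two
  calc ∫ x, (f x - μ[f|m] x) ^ 2 ∂μ = ∫ x, (f x - μ[f|m] x) * f x ∂μ := by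
        simp_rw [sq]; exact integral_sub_condExp_mul_sub_condExp hm hf hf
    _ = ∫ x, f x * f x ∂μ - ∫ x, μ[f|m] x * f x ∂μ := by
        simp_rw [sub_mul]; exact integral_sub (hf.integrable_mul hf) (hc.integrable_mul hf)
    _ = ∫ x, f x ^ 2 ∂μ - ∫ x, μ[f|m] x ^ 2 ∂μ := by
        simp_rw [sq, mul_comm (μ[f|m] _) (f _)]
        rw [integral_condExp_mul_of_stronglyMeasurable hm stronglyMeasurable_condExp
          (hf.integrable_mul hc) (hf.integrable one_le_two)]

end ConditionalExpectation

section RadonNikodym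

variable {Ω E : Type*} [MeasurableSpace Ω] [MeasurableSpace E] {μ ν : Measure Ω}
  [IsFiniteMeasure μ] [IsFiniteMeasure ν] {φ : Ω → E}

theorem condExp_comap_toReal_rnDeriv (hac : μ ≪ ν) (hφ : Measurable φ) :
    ν[fun ω => (μ.rnDeriv ν ω).toReal | MeasurableSpace.comap φ ‹_›]
      =ᵐ[ν] fun ω => ((μ.map φ).rnDeriv (ν.map φ) (φ ω)).toReal := by
  have hρ : Measurable fun y => ((μ.map φ).rnDeriv (ν.map φ) y).toReal :=
    (Measure.measurable_rnDeriv _ _).ennreal_toReal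
  have hint : Integrable (fun ω => ((μ.map φ).rnDeriv (ν.map φ) (φ ω)).toReal) ν :=
    (integrable_map_measure hρ.aestronglyMeasurable hφ.aemeasurable).mp
      Measure.integrable_toReal_rnDeriv
  refine (ae_eq_condExp_of_forall_setIntegral_eq hφ.comap_le Measure.integrable_toReal_rnDeriv
    (fun s _ _ => hint.integrableOn) ?_ ?_).symm
  · rintro s ⟨t, ht, rfl⟩ _
    rw [← setIntegral_map ht hρ.aestronglyMeasurable hφ.aemeasurable,
      Measure.setIntegral_toReal_rnDeriv (hac.map hφ) t, map_measureReal_apply hφ ht,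
      Measure.setIntegral_toReal_rnDeriv hac (φ ⁻¹' t)]
  · exact (hρ.comp (comap_measurable φ)).stronglyMeasurable.aestronglyMeasurable

theorem integral_sq_toReal_rnDeriv_map_s3 (hac : μ ≪ ν) (hφ : Measurable φ) :
    ∫ y, ((μ.map φ).rnDeriv (ν.map φ) y).toReal ^ 2 ∂(ν.map φ)
      = ∫ ω, (ν[fun ω => (μ.rnDeriv ν ω).toReal | MeasurableSpace.comap φ ‹_›] ω) ^ 2 ∂ν := by
  rw [integral_map hφ.aemeasurable
    ((Measure.measurable_rnDeriv _ _).ennreal_toReal.pow_const 2).aestronglyMeasurable]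
  exact integral_congr_ae
    ((condExp_comap_toReal_rnDeriv hac hφ).mono fun ω hω => by simp only [hω])

end RadonNikodym

/-- Lemma 3, second part: the absolute confounding bias of adjusting on a representation `φ`
is bounded by the square root of the prognostic score error times the square root of the
improvement in overlap divergence. -/
theorem abs_confounding_bias_le
    {Ω E : Type*} [MeasurableSpace Ω] [MeasurableSpace E]
    (P0 P1 : Measure Ω) [IsProbabilityMeasure P0] [IsProbabilityMeasure P1]
    (hac : P1 ≪ P0)
    (r : Ω → ℝ) (hr : r = fun ω => (P1.rnDeriv P0 ω).toReal)
    (hr2 : MemLp r 2 P0)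
    (m0 : Ω → ℝ) (hm02 : MemLp m0 2 P0)
    (φ : Ω → E) (hφ : Measurable φ)
    (condVarM0 : Ω → ℝ)
    (hcondVarM0 : condVarM0 =
      P0[fun ω =>
          (m0 ω - (P0[m0 | MeasurableSpace.comap φ ‹MeasurableSpace E›]) ω) ^ 2
        | MeasurableSpace.comap φ ‹MeasurableSpace E›]) :
    |∫ ω, m0 ω ∂P1
        - ∫ ω, (P0[m0 | MeasurableSpace.comap φ ‹MeasurableSpace E›]) ω ∂P1|
      ≤ Real.sqrt (∫ ω, condVarM0 ω ∂P0)
        * Real.sqrt (∫ ω, (r ω) ^ 2 ∂P0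
            - ∫ y, (((P1.map φ).rnDeriv (P0.map φ) y).toReal) ^ 2 ∂(P0.map φ)) := by
  subst hr hcondVarM0
  have hm := hφ.comap_le
  have hg2 := hm02.condExp (m := MeasurableSpace.comap φ ‹_›) one_le_two
  have hbias : ∫ ω, m0 ω ∂P1 - ∫ ω, (P0[m0 | MeasurableSpace.comap φ ‹_›]) ω ∂P1
      = ∫ ω, (m0 ω - (P0[m0 | MeasurableSpace.comap φ ‹_›]) ω)
          * (P1.rnDeriv P0 ω).toReal ∂P0 := by
    rw [← integral_rnDeriv_smul hac, ← integral_rnDeriv_smul hac]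
    refine (integral_sub (hr2.integrable_mul hm02) (hr2.integrable_mul hg2)).symm.trans ?_
    exact integral_congr_ae (.of_forall fun ω => by simp only [Pi.mul_apply]; ring)
  rw [hbias, ← integral_sub_condExp_mul_sub_condExp hm hm02 hr2, integral_condExp hm,
    integral_sq_toReal_rnDeriv_map_s3 hac hφ, ← integral_sub_condExp_sq hm hr2]
  exact abs_integral_mul_le_sqrt_mul_sqrt (hm02.sub hg2) (hr2.sub (hr2.condExp one_le_two))
end

section
/- Let d ≥ 2 and let α, β be unit vectors in the Euclidean space ℝ^d with inner product ⟪·,·⟫ such that ⟪α,β⟫ ∈ (−1,1). For a unit vector γ ∈ ℝ^d, the identity ⟪α,γ⟫·⟪γ,β⟫ = ⟪α,β⟫ holds if and only if there exist real numbers w1, w2 and a vector n ∈ ℝ^d such that γ = w1·(α+β)/sqrt(2+2⟪α,β⟫) + w2·(α−β)/sqrt(2−2⟪α,β⟫) + n, with (1+⟪α,β⟫)·w1² − (1−⟪α,β⟫)·w2² = 2⟪α,β⟫, w1² + w2² ≤ 1, ⟪n,α⟫ = 0, ⟪n,β⟫ = 0 and ‖n‖ = sqrt(1 − w1² − w2²).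 -/
open scoped RealInnerProductSpace

/-!
Put `u = (α + β) / ‖α + β‖` and `v = (α - β) / ‖α - β‖`; these are orthonormal because
`‖α‖ = ‖β‖`. Since `4 ⟪α, γ⟫ ⟪γ, β⟫ = ⟪α + β, γ⟫² - ⟪α - β, γ⟫²`, for unit `α, β` the condition
`⟪α, γ⟫ ⟪γ, β⟫ = ⟪α, β⟫` is the hyperbola `(1 + ⟪α, β⟫) w₁² - (1 - ⟪α, β⟫) w₂² = 2 ⟪α, β⟫` in the
coordinates `w₁ = ⟪u, γ⟫`, `w₂ = ⟪v, γ⟫`. The remainder `γ - w₁ u - w₂ v` is orthogonal to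
`span {α, β} = span {u, v}`, and Pythagoras with `‖γ‖ = 1` fixes its norm.
-/

open NormedSpace

variable {E : Type*} [NormedAddCommGroup E] [InnerProductSpace ℝ E]

theorem norm_mul_inner_normalize (x y : E) : ‖x‖ * ⟪normalize x, y⟫ = ⟪x, y⟫ := by
  rw [← real_inner_smul_left, norm_smul_normalize]

theorem inner_normalize_eq_zero_iff (x y : E) : ⟪y, normalize x⟫ = 0 ↔ ⟪y, x⟫ = 0 := by
  by_cases hx : x = 0
  · simp [hx]
  · simp [NormedSpace.normalize, real_inner_smul_right, hx]

theorem inner_normalize_add_normalize_sub_eq_zero {α β : E} (h : ‖α‖ = ‖β‖) :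
    ⟪normalize (α + β), normalize (α - β)⟫ = 0 := by
  rw [inner_normalize_eq_zero_iff, real_inner_comm, inner_normalize_eq_zero_iff,
    real_inner_comm, real_inner_add_sub_eq_zero_iff]
  exact h

theorem inner_normalize_add_sub_eq_zero_iff (α β n : E) :
    ⟪n, normalize (α + β)⟫ = 0 ∧ ⟪n, normalize (α - β)⟫ = 0 ↔ ⟪n, α⟫ = 0 ∧ ⟪n, β⟫ = 0 := by
  rw [inner_normalize_eq_zero_iff, inner_normalize_eq_zero_iff, inner_add_right, inner_sub_right]
  constructor <;> rintro ⟨h₁, h₂⟩ <;> constructor <;> linarith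

theorem four_mul_inner_mul_inner (α β γ : E) :
    4 * (⟪α, γ⟫ * ⟪γ, β⟫) =
      ‖α + β‖ ^ 2 * ⟪normalize (α + β), γ⟫ ^ 2 - ‖α - β‖ ^ 2 * ⟪normalize (α - β), γ⟫ ^ 2 := by
  rw [← mul_pow, ← mul_pow, norm_mul_inner_normalize, norm_mul_inner_normalize, inner_add_left,
    inner_sub_left, real_inner_comm γ β]
  ring

section UnitVectors

variable {α β : E}

theorem norm_add_eq_sqrt_of_norm_eq_one (hα : ‖α‖ = 1) (hβ : ‖β‖ = 1) :
    ‖α + β‖ = √(2 + 2 * ⟪α, β⟫) := by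
  rw [← Real.sqrt_sq (norm_nonneg _), norm_add_sq_real, hα, hβ]
  ring_nf

theorem norm_sub_eq_sqrt_of_norm_eq_one (hα : ‖α‖ = 1) (hβ : ‖β‖ = 1) :
    ‖α - β‖ = √(2 - 2 * ⟪α, β⟫) := by
  rw [← Real.sqrt_sq (norm_nonneg _), norm_sub_sq_real, hα, hβ]
  ring_nf

theorem add_ne_zero_of_neg_one_lt_inner (hα : ‖α‖ = 1) (h : -1 < ⟪α, β⟫) : α + β ≠ 0 := by
  intro hsum
  rw [eq_neg_of_add_eq_zero_right hsum, inner_neg_right, real_inner_self_eq_norm_sq, hα] at h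
  norm_num at h

theorem sub_ne_zero_of_inner_lt_one (hα : ‖α‖ = 1) (h : ⟪α, β⟫ < 1) : α - β ≠ 0 := by
  intro hdiff
  rw [← sub_eq_zero.mp hdiff, real_inner_self_eq_norm_sq, hα] at h
  norm_num at h

theorem inner_mul_inner_eq_inner_iff (hα : ‖α‖ = 1) (hβ : ‖β‖ = 1) (γ : E) :
    ⟪α, γ⟫ * ⟪γ, β⟫ = ⟪α, β⟫ ↔
      (1 + ⟪α, β⟫) * ⟪normalize (α + β), γ⟫ ^ 2 - (1 - ⟪α, β⟫) * ⟪normalize (α - β), γ⟫ ^ 2 =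
        2 * ⟪α, β⟫ := by
  have key := four_mul_inner_mul_inner α β γ
  rw [norm_add_sq_real, norm_sub_sq_real, hα, hβ] at key
  constructor
  · intro h
    linear_combination (4 * h - key) / 2
  · intro h
    linear_combination key / 4 + h / 2

end UnitVectors

section OrthonormalPair

variable {u v : E}

theorem inner_smul_add_smul_add_of_orthonormal (hu : ‖u‖ = 1) (hv : ‖v‖ = 1) (huv : ⟪u, v⟫ = 0)
    {n : E} (hnu : ⟪n, u⟫ = 0) (hnv : ⟪n, v⟫ = 0) (w₁ w₂ : ℝ) :
    ⟪u, w₁ • u + w₂ • v + n⟫ = w₁ ∧ ⟪v, w₁ • u + w₂ • v + n⟫ = w₂ := by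
  simp only [inner_add_right, real_inner_smul_right, real_inner_self_eq_norm_sq, hu, hv,
    real_inner_comm n u, real_inner_comm n v, real_inner_comm u v, huv, hnu, hnv]
  constructor <;> ring

theorem norm_sq_smul_add_smul_add_of_orthonormal (hu : ‖u‖ = 1) (hv : ‖v‖ = 1)
    (huv : ⟪u, v⟫ = 0) {n : E} (hnu : ⟪n, u⟫ = 0) (hnv : ⟪n, v⟫ = 0) (w₁ w₂ : ℝ) :
    ‖w₁ • u + w₂ • v + n‖ ^ 2 = w₁ ^ 2 + w₂ ^ 2 + ‖n‖ ^ 2 := by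
  simp only [← real_inner_self_eq_norm_sq, inner_add_left, inner_add_right, real_inner_smul_left,
    real_inner_smul_right]
  simp only [real_inner_self_eq_norm_sq, hu, hv, real_inner_comm n u, real_inner_comm n v,
    real_inner_comm u v, huv, hnu, hnv]
  ring

theorem exists_eq_smul_add_smul_add_of_orthonormal (hu : ‖u‖ = 1) (hv : ‖v‖ = 1)
    (huv : ⟪u, v⟫ = 0) (γ : E) :
    ∃ n : E, γ = ⟪u, γ⟫ • u + ⟪v, γ⟫ • v + n ∧ ⟪n, u⟫ = 0 ∧ ⟪n, v⟫ = 0 := by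
  refine ⟨γ - ⟪u, γ⟫ • u - ⟪v, γ⟫ • v, by abel, ?_, ?_⟩ <;>
  simp only [inner_sub_left, real_inner_smul_left, real_inner_self_eq_norm_sq, hu, hv,
    real_inner_comm u γ, real_inner_comm v γ, real_inner_comm u v, huv] <;> ring

end OrthonormalPair

theorem deconfounding_hyperbola_characterization_general
    {d : ℕ}
    (α β : EuclideanSpace ℝ (Fin d)) (hα : ‖α‖ = 1) (hβ : ‖β‖ = 1)
    (hαβ : ⟪α, β⟫ ∈ Set.Ioo (-1 : ℝ) 1)
    (γ : EuclideanSpace ℝ (Fin d)) (hγ : ‖γ‖ = 1) :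
    ⟪α, γ⟫ * ⟪γ, β⟫ = ⟪α, β⟫ ↔
      ∃ (w1 w2 : ℝ) (n : EuclideanSpace ℝ (Fin d)),
        γ = w1 • ((Real.sqrt (2 + 2 * ⟪α, β⟫))⁻¹ • (α + β))
            + w2 • ((Real.sqrt (2 - 2 * ⟪α, β⟫))⁻¹ • (α - β)) + n ∧
        (1 + ⟪α, β⟫) * w1 ^ 2 - (1 - ⟪α, β⟫) * w2 ^ 2 = 2 * ⟪α, β⟫ ∧
        w1 ^ 2 + w2 ^ 2 ≤ 1 ∧
        ⟪n, α⟫ = 0 ∧ ⟪n, β⟫ = 0 ∧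
        ‖n‖ = Real.sqrt (1 - w1 ^ 2 - w2 ^ 2) := by
  have hu := norm_normalize (add_ne_zero_of_neg_one_lt_inner hα hαβ.1)
  have hv := norm_normalize (sub_ne_zero_of_inner_lt_one hα hαβ.2)
  have huv := inner_normalize_add_normalize_sub_eq_zero (hα.trans hβ.symm)
  rw [← norm_add_eq_sqrt_of_norm_eq_one hα hβ, ← norm_sub_eq_sqrt_of_norm_eq_one hα hβ,
    inner_mul_inner_eq_inner_iff hα hβ]
  change _ ↔ ∃ (w1 w2 : ℝ) (n : EuclideanSpace ℝ (Fin d)),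
    γ = w1 • normalize (α + β) + w2 • normalize (α - β) + n ∧ _
  constructor
  · intro h
    obtain ⟨n, hγn, hnu, hnv⟩ := exists_eq_smul_add_smul_add_of_orthonormal hu hv huv γ
    have hpyth := norm_sq_smul_add_smul_add_of_orthonormal hu hv huv hnu hnv
      ⟪normalize (α + β), γ⟫ ⟪normalize (α - β), γ⟫
    rw [← hγn, hγ, one_pow] at hpyth
    obtain ⟨hnα, hnβ⟩ := (inner_normalize_add_sub_eq_zero_iff α β n).mp ⟨hnu, hnv⟩
    refine ⟨_, _, n, hγn, h, by linarith [sq_nonneg ‖n‖], hnα, hnβ, ?_⟩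
    rw [← Real.sqrt_sq (norm_nonneg n)]
    congr 1
    linarith
  · rintro ⟨w₁, w₂, n, rfl, hhyp, -, hnα, hnβ, -⟩
    obtain ⟨hnu, hnv⟩ := (inner_normalize_add_sub_eq_zero_iff α β n).mpr ⟨hnα, hnβ⟩
    obtain ⟨h₁, h₂⟩ := inner_smul_add_smul_add_of_orthonormal hu hv huv hnu hnv w₁ w₂
    rwa [h₁, h₂]

/-- Theorem 1, algebraic core: for unit vectors `α, β` with `⟪α,β⟫ ∈ (−1,1)`, a unit vector `γ`
satisfies `⟪α,γ⟫⟪γ,β⟫ = ⟪α,β⟫` iff it decomposes along the hyperbola in the span of `α, β`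
plus an orthogonal component. -/
theorem deconfounding_hyperbola_characterization
    {d : ℕ} (hd : 2 ≤ d)
    (α β : EuclideanSpace ℝ (Fin d)) (hα : ‖α‖ = 1) (hβ : ‖β‖ = 1)
    (hαβ : ⟪α, β⟫ ∈ Set.Ioo (-1 : ℝ) 1)
    (γ : EuclideanSpace ℝ (Fin d)) (hγ : ‖γ‖ = 1) :
    ⟪α, γ⟫ * ⟪γ, β⟫ = ⟪α, β⟫ ↔
      ∃ (w1 w2 : ℝ) (n : EuclideanSpace ℝ (Fin d)),
        γ = w1 • ((Real.sqrt (2 + 2 * ⟪α, β⟫))⁻¹ • (α + β))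
            + w2 • ((Real.sqrt (2 - 2 * ⟪α, β⟫))⁻¹ • (α - β)) + n ∧
        (1 + ⟪α, β⟫) * w1 ^ 2 - (1 - ⟪α, β⟫) * w2 ^ 2 = 2 * ⟪α, β⟫ ∧
        w1 ^ 2 + w2 ^ 2 ≤ 1 ∧
        ⟪n, α⟫ = 0 ∧ ⟪n, β⟫ = 0 ∧
        ‖n‖ = Real.sqrt (1 - w1 ^ 2 - w2 ^ 2) :=
  deconfounding_hyperbola_characterization_general α β hα hβ hαβ γ hγ
end

section
/- Let μ ∈ ℝ, σ > 0 and λ ∈ ℝ with 2λσ² < 1, and let Z be distributed according to the real Gaussian measure N(0,1). Then E[|Z| · exp(λ(μ + σZ)²)] ≤ exp(λμ²/(1 − 2λσ²)) · ( (1 − 2λσ²)^{−1/2} + (1 − 2λσ²)^{−3/2} + 4λ²σ²μ² · (1 − 2λσ²)^{−5/2} ). -/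
/-!
Since `|z| ≤ 1 + z²`, it suffices to compute `E[(1 + Z²) exp(λ(μ + σZ)²)]` exactly. Completing the
square, the standard Gaussian density tilted by `exp(λ(μ + σz)²)` is `exp(λμ²/a) / √a` times the
density of `N(2λμσ/a, 1/a)`, where `a = 1 − 2λσ²`; the second moment of that Gaussian gives
`E[(1 + Z²) exp(λ(μ + σZ)²)] = exp(λμ²/a) a^{-1/2} (1 + 1/a + (2λμσ/a)²)`.
-/

open MeasureTheory ProbabilityTheory Real
open scoped NNReal ENNReal

lemma integral_sq_gaussianReal (μ : ℝ) (v : ℝ≥0) :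
    ∫ x, x ^ 2 ∂gaussianReal μ v = v + μ ^ 2 := by
  have h := variance_eq_sub (memLp_id_gaussianReal (μ := μ) (v := v) 2)
  rw [variance_id_gaussianReal] at h
  simp only [Pi.pow_apply, id_eq, integral_id_gaussianReal] at h
  linarith

section ExpSqTilt

variable (m σ l : ℝ)

lemma gaussianPDFReal_mul_exp_sq (hl : 2 * l * σ ^ 2 < 1) (x : ℝ) :
    gaussianPDFReal 0 1 x * exp (l * (m + σ * x) ^ 2)
      = exp (l * m ^ 2 / (1 - 2 * l * σ ^ 2)) / √(1 - 2 * l * σ ^ 2)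
        * gaussianPDFReal (2 * l * m * σ / (1 - 2 * l * σ ^ 2))
            (1 - 2 * l * σ ^ 2)⁻¹.toNNReal x := by
  set a := 1 - 2 * l * σ ^ 2
  have ha : 0 < a := by linarith
  have hsqrt : √(2 * π * a⁻¹) = √(2 * π) / √a := by
    rw [sqrt_mul' _ (inv_nonneg.2 ha.le), sqrt_inv, div_eq_mul_inv]
  have hexp : -x ^ 2 / 2 + l * (m + σ * x) ^ 2
      = l * m ^ 2 / a + -(x - 2 * l * m * σ / a) ^ 2 / (2 * a⁻¹) := by
    field_simp
    ring
  have hs : 0 < √a := sqrt_pos.mpr ha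
  simp only [gaussianPDFReal, NNReal.coe_one, mul_one, sub_zero,
    Real.coe_toNNReal _ (inv_pos.mpr ha).le, hsqrt]
  rw [mul_assoc, ← exp_add, hexp, exp_add]
  field_simp

lemma gaussianReal_withDensity_exp_sq (hl : 2 * l * σ ^ 2 < 1) :
    (gaussianReal 0 1).withDensity (fun x ↦ ENNReal.ofReal (exp (l * (m + σ * x) ^ 2)))
      = ENNReal.ofReal (exp (l * m ^ 2 / (1 - 2 * l * σ ^ 2)) / √(1 - 2 * l * σ ^ 2))
        • gaussianReal (2 * l * m * σ / (1 - 2 * l * σ ^ 2))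
            (1 - 2 * l * σ ^ 2)⁻¹.toNNReal := by
  have hv : (1 - 2 * l * σ ^ 2)⁻¹.toNNReal ≠ 0 := by
    simp only [ne_eq, Real.toNNReal_eq_zero, not_le, inv_pos]
    linarith
  rw [gaussianReal_of_var_ne_zero _ one_ne_zero, gaussianReal_of_var_ne_zero _ hv,
    ← withDensity_mul _ (measurable_gaussianPDF _ _) (by fun_prop),
    ← withDensity_smul' _ _ ENNReal.ofReal_ne_top]
  congr 1
  ext x
  simp only [Pi.mul_apply, Pi.smul_apply, smul_eq_mul, gaussianPDF]
  rw [← ENNReal.ofReal_mul (gaussianPDFReal_nonneg _ _ _), gaussianPDFReal_mul_exp_sq m σ l hl,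
    ENNReal.ofReal_mul (by positivity)]

lemma integral_mul_exp_sq_gaussianReal (hl : 2 * l * σ ^ 2 < 1) (g : ℝ → ℝ) :
    ∫ x, g x * exp (l * (m + σ * x) ^ 2) ∂gaussianReal 0 1
      = exp (l * m ^ 2 / (1 - 2 * l * σ ^ 2)) / √(1 - 2 * l * σ ^ 2)
        * ∫ x, g x ∂gaussianReal (2 * l * m * σ / (1 - 2 * l * σ ^ 2))
            (1 - 2 * l * σ ^ 2)⁻¹.toNNReal := by
  have h := integral_withDensity_eq_integral_toReal_smul (μ := gaussianReal 0 1) (by fun_prop)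
    (ae_of_all _ fun x ↦ ENNReal.ofReal_lt_top (r := exp (l * (m + σ * x) ^ 2))) g
  rw [gaussianReal_withDensity_exp_sq m σ l hl, integral_smul_measure,
    ENNReal.toReal_ofReal (by positivity)] at h
  simp only [ENNReal.toReal_ofReal (exp_pos _).le, smul_eq_mul] at h
  simp only [h, mul_comm (g _)]

lemma integrable_mul_exp_sq_gaussianReal (hl : 2 * l * σ ^ 2 < 1) {g : ℝ → ℝ}
    (hg : Integrable g (gaussianReal (2 * l * m * σ / (1 - 2 * l * σ ^ 2))
      (1 - 2 * l * σ ^ 2)⁻¹.toNNReal)) :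
    Integrable (fun x ↦ g x * exp (l * (m + σ * x) ^ 2)) (gaussianReal 0 1) := by
  have h := (integrable_withDensity_iff_integrable_smul' (μ := gaussianReal 0 1) (g := g)
    (by fun_prop) (ae_of_all _ fun x ↦ ENNReal.ofReal_lt_top (r := exp (l * (m + σ * x) ^ 2)))).1
  rw [gaussianReal_withDensity_exp_sq m σ l hl] at h
  simpa only [ENNReal.toReal_ofReal (exp_pos _).le, smul_eq_mul, mul_comm (g _)] using
    h (hg.smul_measure ENNReal.ofReal_ne_top)

end ExpSqTilt

lemma abs_le_one_add_sq (x : ℝ) : |x| ≤ 1 + x ^ 2 := by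
  nlinarith [sq_abs x, sq_nonneg (|x| - 1)]

theorem gaussian_abs_exp_sq_moment_bound_general
    (m σ l : ℝ) (hl : 2 * l * σ ^ 2 < 1) :
    ∫ z, |z| * Real.exp (l * (m + σ * z) ^ 2) ∂(gaussianReal 0 1)
      ≤ Real.exp (l * m ^ 2 / (1 - 2 * l * σ ^ 2))
        * ((Real.sqrt (1 - 2 * l * σ ^ 2))⁻¹
          + ((Real.sqrt (1 - 2 * l * σ ^ 2)) ^ 3)⁻¹
          + 4 * l ^ 2 * σ ^ 2 * m ^ 2 * ((Real.sqrt (1 - 2 * l * σ ^ 2)) ^ 5)⁻¹) := by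
  set a := 1 - 2 * l * σ ^ 2 with ha_def
  have ha : 0 < a := by linarith
  have hsq : Integrable (fun x ↦ x ^ 2) (gaussianReal (2 * l * m * σ / a) a⁻¹.toNNReal) :=
    (memLp_id_gaussianReal 2).integrable_sq
  calc ∫ z, |z| * exp (l * (m + σ * z) ^ 2) ∂gaussianReal 0 1
      ≤ ∫ z, (1 + z ^ 2) * exp (l * (m + σ * z) ^ 2) ∂gaussianReal 0 1 :=
        integral_mono_of_nonneg (ae_of_all _ fun z ↦ by positivity)
          (integrable_mul_exp_sq_gaussianReal m σ l hl ((integrable_const 1).add hsq))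
          (ae_of_all _ fun z ↦
            mul_le_mul_of_nonneg_right (abs_le_one_add_sq z) (exp_pos _).le)
    _ = exp (l * m ^ 2 / a) / √a * (1 + (a⁻¹ + (2 * l * m * σ / a) ^ 2)) := by
        rw [integral_mul_exp_sq_gaussianReal m σ l hl, ← ha_def,
          integral_add (integrable_const 1) hsq, integral_sq_gaussianReal,
          Real.coe_toNNReal _ (inv_pos.2 ha).le]
        simp
    _ = _ := by
        have hs : 0 < √a := sqrt_pos.2 ha
        have h3 : √a ^ 3 = a * √a := by rw [pow_succ, sq_sqrt ha.le]
        have h5 : √a ^ 5 = a ^ 2 * √a := by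
          rw [pow_succ, show 4 = 2 * 2 from rfl, pow_mul, sq_sqrt ha.le]
        rw [h3, h5]
        field_simp
        ring

/-- Preliminary bound in the proof of Theorem 2:
`E[|Z| exp(λ(μ+σZ)²)] ≤ exp(λμ²/(1−2λσ²)) ((1−2λσ²)^{−1/2} + (1−2λσ²)^{−3/2}
+ 4λ²σ²μ²(1−2λσ²)^{−5/2})` for `Z ∼ N(0,1)` and `2λσ² < 1`. -/
theorem gaussian_abs_exp_sq_moment_bound
    (m σ l : ℝ) (hσ : 0 < σ) (hl : 2 * l * σ ^ 2 < 1) :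
    ∫ z, |z| * Real.exp (l * (m + σ * z) ^ 2) ∂(gaussianReal 0 1)
      ≤ Real.exp (l * m ^ 2 / (1 - 2 * l * σ ^ 2))
        * ((Real.sqrt (1 - 2 * l * σ ^ 2))⁻¹
          + ((Real.sqrt (1 - 2 * l * σ ^ 2)) ^ 3)⁻¹
          + 4 * l ^ 2 * σ ^ 2 * m ^ 2 * ((Real.sqrt (1 - 2 * l * σ ^ 2)) ^ 5)⁻¹) :=
  gaussian_abs_exp_sq_moment_bound_general m σ l hl
end

section
/- Let K ≥ 1 be an integer, C > 0, 0 ≤ λ < 1/4, and let h : ℝ → ℝ be (K+1)-times differentiable with |h^{(j)}(z)| ≤ C·exp(λz²) for all z ∈ ℝ and all j = 0,1,…,K+1. For 0 ≤ k ≤ K define J_k(u) := E_Z[ ( E_{Z'}[ h^{(k)}(u·Z + sqrt(1−u²)·Z') ] )² ], where Z and Z' are independent standard Gaussian N(0,1) random variables. Then for every k with 0 ≤ k ≤ K−1 and every u ∈ [0,1), the function J_k is differentiable at u with derivative J_k'(u) = 2u · J_{k+1}(u). -/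
/-!
Write `P_u g (z) = E g(u z + √(1 - u²) Z')`, so that `J_k(u) = E[(P_u h⁽ᵏ⁾)(Z)²]`; for
`u = e^{-t}` this is the Ornstein–Uhlenbeck semigroup. Differentiating under the integral sign,
`∂_z P_u g = u P_u g'` and
`∂_u P_u g (z) = z P_u g' (z) - u / √(1 - u²) E[Z' g'(u z + √(1 - u²) Z')]`,
which Stein's identity `E[Z φ(Z)] = E[φ'(Z)]` turns into `z P_u g' - u P_u g''`. Hence
`J_k' = 2 E[P h⁽ᵏ⁾ (Z P h⁽ᵏ⁺¹⁾ - u P h⁽ᵏ⁺²⁾)(Z)]`, and Stein's identity in `Z`, applied to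
`P h⁽ᵏ⁾ · P h⁽ᵏ⁺¹⁾`, cancels the `P h⁽ᵏ⁾ P h⁽ᵏ⁺²⁾` terms and leaves `2u E[(P h⁽ᵏ⁺¹⁾)(Z)²]`.
The growth bound `C exp(λ z²)` is preserved by `P_u`, and `λ < 1/4` makes products of two
such functions, even times `|z|`, integrable against the Gaussian; this justifies every
interchange.
-/

open MeasureTheory ProbabilityTheory

open Real Filter Set

local notation "γ" => gaussianReal 0 1

lemma measurable_of_hasDerivAt {f f' : ℝ → ℝ} (hf : ∀ x, HasDerivAt f (f' x) x) :
    Measurable f :=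
  (continuous_iff_continuousAt.2 fun x => (hf x).continuousAt).measurable

lemma measurable_deriv_of_hasDerivAt {f f' : ℝ → ℝ} (hf : ∀ x, HasDerivAt f (f' x) x) :
    Measurable f' :=
  funext (fun x => (hf x).deriv) ▸ measurable_deriv f

namespace StdGaussian

lemma integral_eq (g : ℝ → ℝ) : ∫ x, g x ∂γ = ∫ x, gaussianPDFReal 0 1 x * g x :=
  integral_gaussianReal_eq_integral_smul one_ne_zero

lemma integrable_iff {g : ℝ → ℝ} :
    Integrable g γ ↔ Integrable (fun x => gaussianPDFReal 0 1 x * g x) := by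
  rw [gaussianReal_of_var_ne_zero 0 one_ne_zero, integrable_withDensity_iff_integrable_smul'
    (measurable_gaussianPDF 0 1) (ae_of_all _ fun _ => gaussianPDF_lt_top)]
  simp only [toReal_gaussianPDF, smul_eq_mul]

lemma gaussianPDFReal_eq (x : ℝ) :
    gaussianPDFReal 0 1 x = (√(2 * π))⁻¹ * exp (-x ^ 2 / 2) := by
  simp [gaussianPDFReal]

lemma gaussianPDFReal_mul_exp (c x : ℝ) :
    gaussianPDFReal 0 1 x * exp (c * x ^ 2) = (√(2 * π))⁻¹ * exp (-(1 / 2 - c) * x ^ 2) := by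
  rw [gaussianPDFReal_eq, mul_assoc, ← exp_add]
  ring_nf

lemma integrable_exp_mul_sq {c : ℝ} (hc : c < 1 / 2) :
    Integrable (fun x => exp (c * x ^ 2)) γ := by
  rw [integrable_iff]
  refine ((integrable_exp_neg_mul_sq (b := 1 / 2 - c) (by linarith)).const_mul
    (√(2 * π))⁻¹).congr (ae_of_all _ fun x => (gaussianPDFReal_mul_exp c x).symm)

lemma integrable_mul_exp_mul_sq {c : ℝ} (hc : c < 1 / 2) :
    Integrable (fun x => x * exp (c * x ^ 2)) γ := by
  rw [integrable_iff]
  refine ((integrable_mul_exp_neg_mul_sq (b := 1 / 2 - c) (by linarith)).const_mul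
    (√(2 * π))⁻¹).congr (ae_of_all _ fun x => ?_)
  dsimp only
  rw [mul_left_comm (gaussianPDFReal 0 1 x), gaussianPDFReal_mul_exp, mul_left_comm]

lemma integrable_of_abs_le {g : ℝ → ℝ} (hm : AEStronglyMeasurable g γ) {A B c : ℝ}
    (hc : c < 1 / 2) (hg : ∀ x, |g x| ≤ (A + B * |x|) * exp (c * x ^ 2)) : Integrable g γ := by
  refine (((integrable_exp_mul_sq hc).const_mul A).add
    ((integrable_mul_exp_mul_sq hc).norm.const_mul B)).mono' hm (ae_of_all _ fun x => ?_)
  simpa [norm_mul, abs_of_pos (exp_pos _), add_mul, mul_assoc] using hg x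

lemma hasDerivAt_gaussianPDFReal (x : ℝ) :
    HasDerivAt (gaussianPDFReal 0 1) (-x * gaussianPDFReal 0 1 x) x := by
  have h : HasDerivAt (fun y : ℝ => -y ^ 2 / 2) (-x) x :=
    ((hasDerivAt_pow 2 x).neg.div_const 2).congr_deriv (by ring)
  rw [show gaussianPDFReal 0 1 = _ from funext gaussianPDFReal_eq]
  exact (h.exp.const_mul _).congr_deriv (by ring)

/-- Stein's lemma: Gaussian integration by parts. -/
theorem integral_mul_eq_integral_deriv {g g' : ℝ → ℝ} (hd : ∀ x, HasDerivAt g (g' x) x)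
    {B c : ℝ} (hc : c < 1 / 2) (hg : ∀ x, |g x| ≤ B * exp (c * x ^ 2))
    (hg' : ∀ x, |g' x| ≤ B * exp (c * x ^ 2)) :
    ∫ x, x * g x ∂γ = ∫ x, g' x ∂γ := by
  have hgm := measurable_of_hasDerivAt hd
  have hg'm := measurable_deriv_of_hasDerivAt hd
  have hint : ∀ {f : ℝ → ℝ}, Measurable f → (∀ x, |f x| ≤ B * exp (c * x ^ 2)) →
      Integrable (fun x => gaussianPDFReal 0 1 x * f x) := fun hfm hf =>
    integrable_iff.1 (integrable_of_abs_le hfm.aestronglyMeasurable hc (A := B) (B := 0)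
      (by simpa using hf))
  have hxg : Integrable (fun x => gaussianPDFReal 0 1 x * (x * g x)) :=
    integrable_iff.1 (integrable_of_abs_le (measurable_id.mul hgm).aestronglyMeasurable hc
      (A := 0) (B := B) fun x => by
        rw [abs_mul]; nlinarith [hg x, abs_nonneg x, exp_pos (c * x ^ 2)])
  have parts := integral_mul_deriv_eq_deriv_mul_of_integrable (fun x _ => hd x)
    (fun x _ => hasDerivAt_gaussianPDFReal x)
    (hxg.neg.congr (ae_of_all _ fun x => by simp only [Pi.mul_apply, Pi.neg_apply]; ring))
    ((hint hg'm hg').congr (ae_of_all _ fun x => mul_comm _ _))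
    ((hint hgm hg).congr (ae_of_all _ fun x => mul_comm _ _))
  simp only [mul_neg, neg_mul, integral_neg, neg_inj] at parts
  rw [integral_eq, integral_eq]
  calc ∫ x, gaussianPDFReal 0 1 x * (x * g x) = ∫ x, g x * (x * gaussianPDFReal 0 1 x) := by
        congr 1 with x; ring
    _ = ∫ x, gaussianPDFReal 0 1 x * g' x := by
        rw [parts]; congr 1 with x; ring

end StdGaussian

open StdGaussian

lemma sq_mul_add_sqrt_one_sub_sq_mul_le {u : ℝ} (hu : |u| ≤ 1) (z z' : ℝ) :
    (u * z + √(1 - u ^ 2) * z') ^ 2 ≤ z ^ 2 + z' ^ 2 := by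
  have hs : √(1 - u ^ 2) ^ 2 = 1 - u ^ 2 := sq_sqrt (by simpa using hu)
  nlinarith [sq_nonneg (u * z' - √(1 - u ^ 2) * z)]

lemma hasDerivAt_sqrt_one_sub_sq {u : ℝ} (hu : |u| < 1) :
    HasDerivAt (fun v => √(1 - v ^ 2)) (-u / √(1 - u ^ 2)) u := by
  have h : 1 - u ^ 2 ≠ 0 := by nlinarith [sq_abs u, abs_nonneg u]
  refine (((hasDerivAt_pow 2 u).const_sub 1).sqrt h).congr_deriv ?_
  field_simp
  ring

lemma abs_div_sqrt_one_sub_sq_le {a v : ℝ} (hva : |v| ≤ a) (ha : a < 1) :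
    |v / √(1 - v ^ 2)| ≤ a / √(1 - a ^ 2) := by
  rw [abs_div, abs_of_nonneg (sqrt_nonneg _)]
  exact div_le_div₀ ((abs_nonneg v).trans hva) hva
    (sqrt_pos.2 (by nlinarith [abs_nonneg v]))
    (sqrt_le_sqrt (by nlinarith [sq_abs v, abs_nonneg v]))

/-- The Ornstein–Uhlenbeck semigroup `P_t` in Mehler's form, with `u = e^{-t}`. -/
noncomputable def mehler (u : ℝ) (f : ℝ → ℝ) (z : ℝ) : ℝ :=
  ∫ z', f (u * z + √(1 - u ^ 2) * z') ∂γ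

section Mehler

variable {f f' f'' : ℝ → ℝ} {C l u : ℝ}

lemma nonneg_of_abs_le_mul_exp (hf : ∀ x, |f x| ≤ C * exp (l * x ^ 2)) : 0 ≤ C := by
  simpa using (abs_nonneg _).trans (hf 0)

lemma abs_mehler_integrand_le (hl0 : 0 ≤ l) (hf : ∀ x, |f x| ≤ C * exp (l * x ^ 2))
    (hu : |u| ≤ 1) (z z' : ℝ) :
    |f (u * z + √(1 - u ^ 2) * z')| ≤ C * exp (l * z ^ 2) * exp (l * z' ^ 2) := by
  rw [mul_assoc, ← exp_add]
  refine (hf _).trans (mul_le_mul_of_nonneg_left (exp_le_exp.2 ?_) (nonneg_of_abs_le_mul_exp hf))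
  nlinarith [sq_mul_add_sqrt_one_sub_sq_mul_le hu z z']

lemma integrable_mehler_integrand (hfm : Measurable f) (hl0 : 0 ≤ l) (hl : l < 1 / 2)
    (hf : ∀ x, |f x| ≤ C * exp (l * x ^ 2)) (hu : |u| ≤ 1) (z : ℝ) :
    Integrable (fun z' => f (u * z + √(1 - u ^ 2) * z')) γ :=
  integrable_of_abs_le (hfm.comp (by fun_prop)).aestronglyMeasurable hl
    (A := C * exp (l * z ^ 2)) (B := 0) fun z' => by
      simpa using abs_mehler_integrand_le hl0 hf hu z z'

lemma integrable_mul_mehler_integrand (hfm : Measurable f) (hl0 : 0 ≤ l) (hl : l < 1 / 2)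
    (hf : ∀ x, |f x| ≤ C * exp (l * x ^ 2)) (hu : |u| ≤ 1) (z : ℝ) :
    Integrable (fun z' => z' * f (u * z + √(1 - u ^ 2) * z')) γ :=
  integrable_of_abs_le (measurable_id.mul (hfm.comp (by fun_prop))).aestronglyMeasurable hl
    (A := 0) (B := C * exp (l * z ^ 2)) fun z' => by
      rw [abs_mul, zero_add, mul_comm (C * _), mul_assoc]
      exact mul_le_mul_of_nonneg_left (abs_mehler_integrand_le hl0 hf hu z z') (abs_nonneg z')

lemma abs_mehler_le (hl0 : 0 ≤ l) (hl : l < 1 / 2) (hf : ∀ x, |f x| ≤ C * exp (l * x ^ 2))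
    (hu : |u| ≤ 1) (z : ℝ) :
    |mehler u f z| ≤ C * (∫ x, exp (l * x ^ 2) ∂γ) * exp (l * z ^ 2) :=
  calc |mehler u f z| ≤ ∫ z', C * exp (l * z ^ 2) * exp (l * z' ^ 2) ∂γ :=
        norm_integral_le_of_norm_le (f := fun z' => f (u * z + √(1 - u ^ 2) * z'))
          ((integrable_exp_mul_sq hl).const_mul _)
          (ae_of_all _ fun z' => abs_mehler_integrand_le hl0 hf hu z z')
    _ = C * (∫ x, exp (l * x ^ 2) ∂γ) * exp (l * z ^ 2) := by rw [integral_const_mul]; ring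

lemma measurable_mehler (hfm : Measurable f) (u : ℝ) : Measurable (mehler u f) :=
  (StronglyMeasurable.integral_prod_right' (ν := γ)
    (f := fun p : ℝ × ℝ => f (u * p.1 + √(1 - u ^ 2) * p.2))
    (hfm.comp (by fun_prop)).stronglyMeasurable).measurable

lemma hasDerivAt_mehler (hf : ∀ x, HasDerivAt f (f' x) x) (hl0 : 0 ≤ l) (hl : l < 1 / 2)
    (hfb : ∀ x, |f x| ≤ C * exp (l * x ^ 2)) (hf'b : ∀ x, |f' x| ≤ C * exp (l * x ^ 2))
    (hu : |u| ≤ 1) (z : ℝ) :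
    HasDerivAt (mehler u f) (u * mehler u f' z) z := by
  have hfm := measurable_of_hasDerivAt hf
  have hf'm := measurable_deriv_of_hasDerivAt hf
  have hbound : ∀ y ∈ Metric.ball z 1, ∀ z', ‖u * f' (u * y + √(1 - u ^ 2) * z')‖ ≤
      C * exp (l * (|z| + 1) ^ 2) * exp (l * z' ^ 2) := by
    intro y hy z'
    have hyz : |y| ≤ |z| + 1 := by
      have := abs_sub_abs_le_abs_sub y z
      have := mem_ball_iff_norm.1 hy
      rw [Real.norm_eq_abs] at this
      linarith
    rw [norm_mul, ← one_mul (C * _ * _)]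
    refine mul_le_mul hu ((abs_mehler_integrand_le hl0 hf'b hu y z').trans ?_) (norm_nonneg _)
      zero_le_one
    rw [← sq_abs y]
    gcongr
    exact nonneg_of_abs_le_mul_exp hfb
  have key := hasDerivAt_integral_of_dominated_loc_of_deriv_le
    (F := fun y z' => f (u * y + √(1 - u ^ 2) * z')) (Metric.ball_mem_nhds z one_pos)
    (Eventually.of_forall fun y => (hfm.comp
      (by fun_prop : Measurable fun z' => u * y + √(1 - u ^ 2) * z')).aestronglyMeasurable)
    (integrable_mehler_integrand hfm hl0 hl hfb hu z)
    ((hf'm.comp (by fun_prop)).const_mul u).aestronglyMeasurable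
    (ae_of_all _ fun z' y hy => hbound y hy z')
    ((integrable_exp_mul_sq hl).const_mul _)
    (ae_of_all _ fun z' y _ => ((hf _).comp y
      (((hasDerivAt_id y).const_mul u).add_const _)).congr_deriv (by simp [mul_comm]))
  rw [integral_const_mul] at key
  exact key.2

lemma integral_mul_mehler_integrand (hf : ∀ x, HasDerivAt f (f' x) x) (hl0 : 0 ≤ l)
    (hl : l < 1 / 2) (hfb : ∀ x, |f x| ≤ C * exp (l * x ^ 2))
    (hf'b : ∀ x, |f' x| ≤ C * exp (l * x ^ 2)) (hu : |u| ≤ 1) (z : ℝ) :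
    ∫ z', z' * f (u * z + √(1 - u ^ 2) * z') ∂γ = √(1 - u ^ 2) * mehler u f' z := by
  have hs1 : √(1 - u ^ 2) ≤ 1 := Real.sqrt_le_one.2 (by nlinarith [sq_nonneg u])
  rw [mehler, ← integral_const_mul]
  refine integral_mul_eq_integral_deriv (fun z' => ?_) hl (B := C * exp (l * z ^ 2))
    (fun z' => ?_) (fun z' => ?_)
  · exact ((hf _).comp z' (((hasDerivAt_id z').const_mul _).const_add _)).congr_deriv
      (by simp [mul_comm])
  · exact abs_mehler_integrand_le hl0 hfb hu z z'
  · rw [abs_mul, abs_of_nonneg (sqrt_nonneg _)]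
    exact (mul_le_of_le_one_left (abs_nonneg _) hs1).trans
      (abs_mehler_integrand_le hl0 hf'b hu z z')

lemma hasDerivAt_mehler_integrand_param (hf : ∀ x, HasDerivAt f (f' x) x) (hu : |u| < 1)
    (z z' : ℝ) :
    HasDerivAt (fun v => f (v * z + √(1 - v ^ 2) * z'))
      ((z - u / √(1 - u ^ 2) * z') * f' (u * z + √(1 - u ^ 2) * z')) u := by
  refine ((hf _).comp u ((hasDerivAt_mul_const z).fun_add
    ((hasDerivAt_sqrt_one_sub_sq hu).mul_const z'))).congr_deriv ?_
  ring

lemma abs_mehler_integrand_param_deriv_le {a : ℝ} (hl0 : 0 ≤ l)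
    (hf' : ∀ x, |f' x| ≤ C * exp (l * x ^ 2)) (hua : |u| ≤ a) (ha : a < 1) (z z' : ℝ) :
    |(z - u / √(1 - u ^ 2) * z') * f' (u * z + √(1 - u ^ 2) * z')| ≤
      (|z| + a / √(1 - a ^ 2) * |z'|) * (C * exp (l * z ^ 2) * exp (l * z' ^ 2)) := by
  have hC := nonneg_of_abs_le_mul_exp hf'
  have hκ : 0 ≤ a / √(1 - a ^ 2) := div_nonneg ((abs_nonneg u).trans hua) (sqrt_nonneg _)
  rw [abs_mul]
  refine mul_le_mul ((abs_sub _ _).trans ?_)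
    (abs_mehler_integrand_le hl0 hf' (hua.trans ha.le) z z') (abs_nonneg _) (by positivity)
  rw [abs_mul]
  gcongr
  exact abs_div_sqrt_one_sub_sq_le hua ha

lemma hasDerivAt_mehler_param (hf : ∀ x, HasDerivAt f (f' x) x)
    (hf' : ∀ x, HasDerivAt f' (f'' x) x) (hl0 : 0 ≤ l) (hl : l < 1 / 2)
    (hfb : ∀ x, |f x| ≤ C * exp (l * x ^ 2)) (hf'b : ∀ x, |f' x| ≤ C * exp (l * x ^ 2))
    (hf''b : ∀ x, |f'' x| ≤ C * exp (l * x ^ 2)) (hu : |u| < 1) (z : ℝ) :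
    HasDerivAt (fun v => mehler v f z) (z * mehler u f' z - u * mehler u f'' z) u := by
  have hfm := measurable_of_hasDerivAt hf
  have hf'm := measurable_of_hasDerivAt hf'
  have hC := nonneg_of_abs_le_mul_exp hfb
  obtain ⟨a, hua, ha1⟩ := exists_between hu
  have hκ : 0 ≤ a / √(1 - a ^ 2) := div_nonneg ((abs_nonneg u).trans hua.le) (sqrt_nonneg _)
  have key := hasDerivAt_integral_of_dominated_loc_of_deriv_le
    (F := fun v z' => f (v * z + √(1 - v ^ 2) * z'))
    (Icc_mem_nhds (by linarith [neg_abs_le u]) ((le_abs_self u).trans_lt hua))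
    (Eventually.of_forall fun v => (hfm.comp
      (by fun_prop : Measurable fun z' => v * z + √(1 - v ^ 2) * z')).aestronglyMeasurable)
    (integrable_mehler_integrand hfm hl0 hl hfb hu.le z)
    ((measurable_const.sub (measurable_id.const_mul _)).mul
      (hf'm.comp (by fun_prop))).aestronglyMeasurable
    (ae_of_all _ fun z' v hv =>
      abs_mehler_integrand_param_deriv_le hl0 hf'b (abs_le.2 hv) ha1 z z')
    (integrable_of_abs_le (by fun_prop) hl (A := |z| * (C * exp (l * z ^ 2)))
      (B := a / √(1 - a ^ 2) * (C * exp (l * z ^ 2))) fun x => by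
        rw [abs_of_nonneg (by positivity)]; ring_nf; rfl)
    (ae_of_all _ fun z' v hv =>
      hasDerivAt_mehler_integrand_param hf ((abs_le.2 hv).trans_lt ha1) z z')
  have hs : √(1 - u ^ 2) ≠ 0 := (sqrt_pos.2 (by nlinarith [sq_abs u, abs_nonneg u])).ne'
  refine key.2.congr_deriv ?_
  simp_rw [sub_mul, mul_assoc]
  rw [integral_sub ((integrable_mehler_integrand hf'm hl0 hl hf'b hu.le z).const_mul z)
    ((integrable_mul_mehler_integrand hf'm hl0 hl hf'b hu.le z).const_mul _), integral_const_mul,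
    integral_const_mul, integral_mul_mehler_integrand hf' hl0 hl hf'b hf''b hu.le z,
    ← mul_assoc, div_mul_cancel₀ u hs]
  rfl

lemma abs_mehler_mul_mehler_le {g : ℝ → ℝ} (hl0 : 0 ≤ l) (hl : l < 1 / 2)
    (hf : ∀ x, |f x| ≤ C * exp (l * x ^ 2)) (hg : ∀ x, |g x| ≤ C * exp (l * x ^ 2))
    (hu : |u| ≤ 1) (z : ℝ) :
    |mehler u f z * mehler u g z| ≤ (C * ∫ x, exp (l * x ^ 2) ∂γ) ^ 2 * exp (2 * l * z ^ 2) := by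
  rw [abs_mul, show 2 * l * z ^ 2 = l * z ^ 2 + l * z ^ 2 by ring, exp_add, sq,
    mul_mul_mul_comm]
  exact mul_le_mul (abs_mehler_le hl0 hl hf hu z) (abs_mehler_le hl0 hl hg hu z) (abs_nonneg _)
    ((abs_nonneg _).trans (abs_mehler_le hl0 hl hf hu z))

lemma integrable_mehler_mul_mehler {g : ℝ → ℝ} (hfm : Measurable f) (hgm : Measurable g)
    (hl0 : 0 ≤ l) (hl : l < 1 / 4) (hf : ∀ x, |f x| ≤ C * exp (l * x ^ 2))
    (hg : ∀ x, |g x| ≤ C * exp (l * x ^ 2)) (hu : |u| ≤ 1) :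
    Integrable (fun z => mehler u f z * mehler u g z) γ :=
  integrable_of_abs_le
    ((measurable_mehler hfm u).mul (measurable_mehler hgm u)).aestronglyMeasurable
    (by linarith : 2 * l < 1 / 2) (B := 0) fun z => by
      simpa using abs_mehler_mul_mehler_le hl0 (by linarith) hf hg hu z

lemma integrable_id_mul_mehler_mul_mehler {g : ℝ → ℝ} (hfm : Measurable f)
    (hgm : Measurable g) (hl0 : 0 ≤ l) (hl : l < 1 / 4) (hf : ∀ x, |f x| ≤ C * exp (l * x ^ 2))
    (hg : ∀ x, |g x| ≤ C * exp (l * x ^ 2)) (hu : |u| ≤ 1) :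
    Integrable (fun z => z * (mehler u f z * mehler u g z)) γ :=
  integrable_of_abs_le (measurable_id.mul ((measurable_mehler hfm u).mul
    (measurable_mehler hgm u))).aestronglyMeasurable (by linarith : 2 * l < 1 / 2) (A := 0)
    fun z => by
      rw [abs_mul, zero_add, mul_comm _ |z|, mul_assoc]
      exact mul_le_mul_of_nonneg_left (abs_mehler_mul_mehler_le hl0 (by linarith) hf hg hu z)
        (abs_nonneg z)

lemma integral_id_mul_mehler_mul_mehler (hf : ∀ x, HasDerivAt f (f' x) x)
    (hf' : ∀ x, HasDerivAt f' (f'' x) x) (hl0 : 0 ≤ l) (hl : l < 1 / 4)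
    (hfb : ∀ x, |f x| ≤ C * exp (l * x ^ 2)) (hf'b : ∀ x, |f' x| ≤ C * exp (l * x ^ 2))
    (hf''b : ∀ x, |f'' x| ≤ C * exp (l * x ^ 2)) (hu : |u| ≤ 1) :
    ∫ z, z * (mehler u f z * mehler u f' z) ∂γ =
      u * ∫ z, mehler u f' z ^ 2 ∂γ + u * ∫ z, mehler u f z * mehler u f'' z ∂γ := by
  have hl2 : l < 1 / 2 := by linarith
  have hfm := measurable_of_hasDerivAt hf
  have hf'm := measurable_of_hasDerivAt hf'
  have hf''m := measurable_deriv_of_hasDerivAt hf'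
  set M := C * ∫ x, exp (l * x ^ 2) ∂γ
  simp_rw [sq (mehler u f' _)]
  rw [integral_mul_eq_integral_deriv
      (fun z => (hasDerivAt_mehler hf hl0 hl2 hfb hf'b hu z).fun_mul
        (hasDerivAt_mehler hf' hl0 hl2 hf'b hf''b hu z)) (by linarith : 2 * l < 1 / 2)
      (B := 2 * M ^ 2) (fun z => ?_) (fun z => ?_), ← integral_const_mul, ← integral_const_mul,
    ← integral_add ((integrable_mehler_mul_mehler hf'm hf'm hl0 hl hf'b hf'b hu).const_mul u)
      ((integrable_mehler_mul_mehler hfm hf''m hl0 hl hfb hf''b hu).const_mul u)]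
  · congr 1 with z
    ring
  · have := abs_mehler_mul_mehler_le hl0 hl2 hfb hf'b hu z
    nlinarith [exp_pos (2 * l * z ^ 2), sq_nonneg M]
  · have h1 := abs_mehler_mul_mehler_le hl0 hl2 hf'b hf'b hu z
    have h2 := abs_mehler_mul_mehler_le hl0 hl2 hfb hf''b hu z
    calc |u * mehler u f' z * mehler u f' z + mehler u f z * (u * mehler u f'' z)|
        = |u| * |mehler u f' z * mehler u f' z + mehler u f z * mehler u f'' z| := by
          rw [← abs_mul]; ring_nf
      _ ≤ 1 * (M ^ 2 * exp (2 * l * z ^ 2) + M ^ 2 * exp (2 * l * z ^ 2)) :=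
          mul_le_mul hu ((abs_add_le _ _).trans (add_le_add h1 h2)) (abs_nonneg _) zero_le_one
      _ = 2 * M ^ 2 * exp (2 * l * z ^ 2) := by ring

lemma abs_two_mul_mehler_mul_sub_le {v : ℝ} (hl0 : 0 ≤ l) (hl : l < 1 / 2)
    (hfb : ∀ x, |f x| ≤ C * exp (l * x ^ 2)) (hf'b : ∀ x, |f' x| ≤ C * exp (l * x ^ 2))
    (hf''b : ∀ x, |f'' x| ≤ C * exp (l * x ^ 2)) (hv : |v| ≤ 1) (z : ℝ) :
    |2 * mehler v f z * (z * mehler v f' z - v * mehler v f'' z)| ≤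
      (2 * (C * ∫ x, exp (l * x ^ 2) ∂γ) ^ 2 + 2 * (C * ∫ x, exp (l * x ^ 2) ∂γ) ^ 2 * |z|) *
        exp (2 * l * z ^ 2) := by
  set M := C * ∫ x, exp (l * x ^ 2) ∂γ
  have h1 := abs_mehler_mul_mehler_le hl0 hl hfb hf'b hv z
  have h2 := abs_mehler_mul_mehler_le hl0 hl hfb hf''b hv z
  calc |2 * mehler v f z * (z * mehler v f' z - v * mehler v f'' z)|
      = 2 * |z * (mehler v f z * mehler v f' z) - v * (mehler v f z * mehler v f'' z)| := by
        rw [← abs_two, ← abs_mul]; ring_nf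
    _ ≤ 2 * (|z| * (M ^ 2 * exp (2 * l * z ^ 2)) + 1 * (M ^ 2 * exp (2 * l * z ^ 2))) := by
        grw [abs_sub, abs_mul z, abs_mul v, h1, h2, hv]
    _ = (2 * M ^ 2 + 2 * M ^ 2 * |z|) * exp (2 * l * z ^ 2) := by ring

theorem hasDerivAt_integral_sq_mehler (hf : ∀ x, HasDerivAt f (f' x) x)
    (hf' : ∀ x, HasDerivAt f' (f'' x) x) (hl0 : 0 ≤ l) (hl : l < 1 / 4)
    (hfb : ∀ x, |f x| ≤ C * exp (l * x ^ 2)) (hf'b : ∀ x, |f' x| ≤ C * exp (l * x ^ 2))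
    (hf''b : ∀ x, |f'' x| ≤ C * exp (l * x ^ 2)) (hu : |u| < 1) :
    HasDerivAt (fun v => ∫ z, mehler v f z ^ 2 ∂γ) (2 * u * ∫ z, mehler u f' z ^ 2 ∂γ) u := by
  have hl2 : l < 1 / 2 := by linarith
  have hfm := measurable_of_hasDerivAt hf
  have hf'm := measurable_of_hasDerivAt hf'
  have hf''m := measurable_deriv_of_hasDerivAt hf'
  have key := hasDerivAt_integral_of_dominated_loc_of_deriv_le
    (F := fun v z => mehler v f z ^ 2) (Ioo_mem_nhds (abs_lt.1 hu).1 (abs_lt.1 hu).2)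
    (Eventually.of_forall fun v => ((measurable_mehler hfm v).pow_const 2).aestronglyMeasurable)
    ((integrable_mehler_mul_mehler hfm hfm hl0 hl hfb hfb hu.le).congr
      (ae_of_all _ fun z => (sq _).symm))
    (((measurable_mehler hfm u).const_mul 2).mul ((measurable_id.mul (measurable_mehler hf'm u)).sub
      ((measurable_mehler hf''m u).const_mul u))).aestronglyMeasurable
    (ae_of_all _ fun z v hv =>
      abs_two_mul_mehler_mul_sub_le hl0 hl2 hfb hf'b hf''b (abs_lt.2 hv).le z)
    (integrable_of_abs_le (by fun_prop) (by linarith : 2 * l < 1 / 2) fun z => by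
      rw [abs_of_nonneg (by positivity)])
    (ae_of_all _ fun z v hv => ((hasDerivAt_mehler_param hf hf' hl0 hl2 hfb hf'b hf''b
      (abs_lt.2 hv) z).pow 2).congr_deriv (by push_cast; ring))
  refine key.2.congr_deriv ?_
  calc ∫ z, 2 * mehler u f z * (z * mehler u f' z - u * mehler u f'' z) ∂γ
      = 2 * ∫ z, z * (mehler u f z * mehler u f' z) ∂γ -
          2 * u * ∫ z, mehler u f z * mehler u f'' z ∂γ := by
        rw [← integral_const_mul, ← integral_const_mul, ← integral_sub
          ((integrable_id_mul_mehler_mul_mehler hfm hf'm hl0 hl hfb hf'b hu.le).const_mul _)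
          ((integrable_mehler_mul_mehler hfm hf''m hl0 hl hfb hf''b hu.le).const_mul _)]
        congr 1 with z
        ring
    _ = 2 * u * ∫ z, mehler u f' z ^ 2 ∂γ := by
        rw [integral_id_mul_mehler_mul_mehler hf hf' hl0 hl hfb hf'b hf''b hu.le]
        ring

end Mehler

theorem gaussian_functional_deriv_recursion_general
    (K : ℕ) (C : ℝ)
    (l : ℝ) (hl0 : 0 ≤ l) (hl : l < 1 / 4)
    (h : ℝ → ℝ)
    (hdiff : ∀ j < K + 1, Differentiable ℝ (iteratedDeriv j h))
    (hbdd : ∀ j ≤ K + 1, ∀ z, |iteratedDeriv j h z| ≤ C * Real.exp (l * z ^ 2))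
    (J : ℕ → ℝ → ℝ)
    (hJ : J = fun k u =>
      ∫ z, (∫ z', iteratedDeriv k h (u * z + Real.sqrt (1 - u ^ 2) * z')
          ∂(gaussianReal 0 1)) ^ 2 ∂(gaussianReal 0 1)) :
    ∀ k < K, ∀ u : ℝ, 0 ≤ u → u < 1 →
      HasDerivAt (J k) (2 * u * J (k + 1) u) u := by
  subst hJ
  intro k hk u hu0 hu1
  have hderiv : ∀ j < K + 1, ∀ x,
      HasDerivAt (iteratedDeriv j h) (iteratedDeriv (j + 1) h x) x := fun j hj x => by
    rw [iteratedDeriv_succ]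
    exact (hdiff j hj x).hasDerivAt
  exact hasDerivAt_integral_sq_mehler (hderiv k (by omega)) (hderiv (k + 1) (by omega)) hl0 hl
    (hbdd k (by omega)) (hbdd (k + 1) (by omega)) (hbdd (k + 2) (by omega))
    (abs_lt.2 ⟨by linarith, hu1⟩)

/-- Derivative recursion from the proof of Theorem 2, part 2.(a)(i): with
`J_k(u) = E_Z[(E_{Z'}[h^{(k)}(uZ + √(1−u²)Z')])²]`, for `0 ≤ k ≤ K−1` and `u ∈ [0,1)`,
`J_k'(u) = 2u·J_{k+1}(u)`. -/
theorem gaussian_functional_deriv_recursion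
    (K : ℕ) (hK : 1 ≤ K) (C : ℝ) (hC : 0 < C)
    (l : ℝ) (hl0 : 0 ≤ l) (hl : l < 1 / 4)
    (h : ℝ → ℝ)
    (hdiff : ∀ j < K + 1, Differentiable ℝ (iteratedDeriv j h))
    (hbdd : ∀ j ≤ K + 1, ∀ z, |iteratedDeriv j h z| ≤ C * Real.exp (l * z ^ 2))
    (J : ℕ → ℝ → ℝ)
    (hJ : J = fun k u =>
      ∫ z, (∫ z', iteratedDeriv k h (u * z + Real.sqrt (1 - u ^ 2) * z')
          ∂(gaussianReal 0 1)) ^ 2 ∂(gaussianReal 0 1)) :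
    ∀ k < K, ∀ u : ℝ, 0 ≤ u → u < 1 →
      HasDerivAt (J k) (2 * u * J (k + 1) u) u :=
  gaussian_functional_deriv_recursion_general K C l hl0 hl h hdiff hbdd J hJ
end

section
/- Let C > 0 and 0 ≤ λ < 1/4, and let h : ℝ → ℝ be twice differentiable with |h(z)| ≤ C·exp(λz²), |h'(z)| ≤ C·exp(λz²) and |h''(z)| ≤ C·exp(λz²) for all z ∈ ℝ. Define g(u) := E_Z[ ( E_{Z'}[ h(u·Z + sqrt(1−u²)·Z') ] )² ] for u ∈ [−1,1], where Z and Z' are independent standard Gaussian N(0,1) random variables. Then g(−u) = g(u) for all u ∈ [−1,1], and g is nondecreasing on [0,1]; consequently g(u) ≤ g(v) whenever |u| ≤ |v|. -/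
/-!
Write `P_ρ f (z) = E f(ρ z + √(1 - ρ²) Z')`, so that `g u = ‖P_u h‖²` in `L²(γ)`, `γ = N(0,1)`.
Since `a Z + b Z'` is centered Gaussian with variance `a² + b²`, the operators `P_ρ` preserve
`γ`-integrals and compose multiplicatively, `P_w ∘ P_v = P_{vw}`; with Jensen's inequality the
first fact makes every `P_w` a contraction of `L²(γ)`. Hence for `0 < v` and `0 ≤ u ≤ v`,
`g u = ‖P_{u/v} (P_v h)‖² ≤ ‖P_v h‖² = g v`. Evenness is the symmetry `z ↦ -z` of `γ`, and the
growth bound with `λ < 1/4` puts `h` in `L²(γ)`.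
-/

open MeasureTheory ProbabilityTheory Real Set

local notation "γ" => gaussianReal 0 1

lemma map_linear_prod_gaussianReal {a b c : ℝ} (habc : a ^ 2 + b ^ 2 = c ^ 2) :
    (Measure.prod γ γ).map (fun p : ℝ × ℝ => a * p.1 + b * p.2) = Measure.map (c * ·) γ := by
  have hsplit : (fun p : ℝ × ℝ => a * p.1 + b * p.2)
      = (fun p : ℝ × ℝ => p.1 + p.2) ∘ Prod.map (a * ·) (b * ·) := rfl
  rw [hsplit, ← Measure.map_map (by fun_prop) (by fun_prop),
    ← Measure.map_prod_map _ _ (by fun_prop) (by fun_prop)]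
  change Measure.map (a * ·) γ ∗ Measure.map (b * ·) γ = _
  simp only [gaussianReal_map_const_mul, gaussianReal_conv_gaussianReal]
  congr 1
  · ring
  · ext; simp [habc]

section linearCombination
variable {a b c : ℝ} {f : ℝ → ℝ}

lemma integral_linear_prod_gaussianReal (habc : a ^ 2 + b ^ 2 = c ^ 2) (hf : Measurable f) :
    ∫ p, f (a * p.1 + b * p.2) ∂(Measure.prod γ γ) = ∫ y, f (c * y) ∂γ := by
  rw [← integral_map (by fun_prop) hf.aestronglyMeasurable, map_linear_prod_gaussianReal habc,
    integral_map (by fun_prop) hf.aestronglyMeasurable]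

lemma integrable_linear_prod_gaussianReal_iff (habc : a ^ 2 + b ^ 2 = c ^ 2) (hf : Measurable f) :
    Integrable (fun p => f (a * p.1 + b * p.2)) (Measure.prod γ γ) ↔
      Integrable (fun y => f (c * y)) γ := by
  change Integrable (f ∘ _) _ ↔ Integrable (f ∘ (c * ·)) γ
  rw [← integrable_map_measure hf.aestronglyMeasurable (by fun_prop),
    map_linear_prod_gaussianReal habc, integrable_map_measure hf.aestronglyMeasurable (by fun_prop)]

end linearCombination

lemma sq_integral_le_integral_sq {Ω : Type*} [MeasurableSpace Ω] {μ : Measure Ω}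
    [IsProbabilityMeasure μ] {X : Ω → ℝ} (hX : MemLp X 2 μ) :
    (∫ ω, X ω ∂μ) ^ 2 ≤ ∫ ω, X ω ^ 2 ∂μ := by
  have := variance_nonneg X μ
  rw [variance_eq_sub hX] at this
  simpa using this

lemma integrable_exp_mul_sq_gaussianReal {t : ℝ} (ht : t < 1 / 2) :
    Integrable (fun z => exp (t * z ^ 2)) γ := by
  rw [gaussianReal_of_var_ne_zero 0 one_ne_zero,
    integrable_withDensity_iff (measurable_gaussianPDF 0 1)
      (.of_forall fun _ => ENNReal.ofReal_lt_top)]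
  have hdensity : (fun x => exp (t * x ^ 2) * (gaussianPDF 0 1 x).toReal)
      = fun x => (√(2 * π))⁻¹ * exp (-(1 / 2 - t) * x ^ 2) := by
    ext x
    rw [gaussianPDF, ENNReal.toReal_ofReal (gaussianPDFReal_nonneg 0 1 x), gaussianPDFReal]
    simp only [NNReal.coe_one, mul_one, sub_zero]
    rw [mul_comm, mul_assoc, ← exp_add]
    ring_nf
  rw [hdensity]
  exact (integrable_exp_neg_mul_sq (by linarith)).const_mul _

lemma memLp_two_gaussianReal_of_abs_le {C l : ℝ} (hl : l < 1 / 4) {f : ℝ → ℝ}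
    (hfm : AEStronglyMeasurable f γ) (hf : ∀ z, |f z| ≤ C * exp (l * z ^ 2)) : MemLp f 2 γ := by
  have hbound : MemLp (fun z => C * exp (l * z ^ 2)) 2 γ := by
    rw [memLp_two_iff_integrable_sq (by fun_prop)]
    refine ((integrable_exp_mul_sq_gaussianReal (t := 2 * l) (by linarith)).const_mul (C ^ 2)).congr
      (.of_forall fun z => ?_)
    simp only [mul_pow, ← exp_nat_mul]
    ring_nf
  refine hbound.of_le hfm (.of_forall fun z => ?_)
  simp only [norm_eq_abs]
  exact (hf z).trans (le_abs_self _)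

noncomputable def noiseOp (ρ : ℝ) (f : ℝ → ℝ) (z : ℝ) : ℝ :=
  ∫ y, f (ρ * z + √(1 - ρ ^ 2) * y) ∂γ

section noiseOp
variable {ρ : ℝ} {f : ℝ → ℝ}

lemma sq_add_sq_sqrt_one_sub_sq (hρ : |ρ| ≤ 1) : ρ ^ 2 + √(1 - ρ ^ 2) ^ 2 = 1 := by
  rw [sq_sqrt (by nlinarith [sq_abs ρ, abs_nonneg ρ])]
  ring

lemma noiseOp_neg (z : ℝ) : noiseOp (-ρ) f z = noiseOp ρ f (-z) := by
  simp [noiseOp]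

lemma measurable_noiseOp (hfm : Measurable f) : Measurable (noiseOp ρ f) :=
  (hfm.comp (by fun_prop : Measurable fun p : ℝ × ℝ => ρ * p.1 + √(1 - ρ ^ 2) * p.2)
    ).stronglyMeasurable.integral_prod_right'.measurable

lemma integrable_noise_prod (hρ : |ρ| ≤ 1) (hfm : Measurable f) (hf : Integrable f γ) :
    Integrable (fun p : ℝ × ℝ => f (ρ * p.1 + √(1 - ρ ^ 2) * p.2)) (Measure.prod γ γ) :=
  (integrable_linear_prod_gaussianReal_iff (by rw [sq_add_sq_sqrt_one_sub_sq hρ, one_pow]) hfm).2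
    (by simpa using hf)

lemma ae_integrable_noise_slice (hρ : |ρ| ≤ 1) (hfm : Measurable f) (hf : Integrable f γ) :
    ∀ᵐ z ∂γ, Integrable (fun y => f (ρ * z + √(1 - ρ ^ 2) * y)) γ :=
  (integrable_noise_prod hρ hfm hf).prod_right_ae

lemma integrable_noiseOp (hρ : |ρ| ≤ 1) (hfm : Measurable f) (hf : Integrable f γ) :
    Integrable (noiseOp ρ f) γ :=
  (integrable_noise_prod hρ hfm hf).integral_prod_left

lemma integral_noiseOp (hρ : |ρ| ≤ 1) (hfm : Measurable f) (hf : Integrable f γ) :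
    ∫ z, noiseOp ρ f z ∂γ = ∫ z, f z ∂γ := by
  unfold noiseOp
  rw [← integral_prod _ (integrable_noise_prod hρ hfm hf),
    integral_linear_prod_gaussianReal (by rw [sq_add_sq_sqrt_one_sub_sq hρ, one_pow]) hfm]
  simp

lemma ae_sq_noiseOp_le (hρ : |ρ| ≤ 1) (hfm : Measurable f) (hf : MemLp f 2 γ) :
    ∀ᵐ z ∂γ, noiseOp ρ f z ^ 2 ≤ noiseOp ρ (fun x => f x ^ 2) z := by
  have hf2 := (memLp_two_iff_integrable_sq hfm.aestronglyMeasurable).1 hf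
  filter_upwards [ae_integrable_noise_slice hρ (hfm.pow_const 2) hf2] with z hz
  exact sq_integral_le_integral_sq
    ((memLp_two_iff_integrable_sq (hfm.comp (by fun_prop)).aestronglyMeasurable).2 hz)

lemma memLp_noiseOp (hρ : |ρ| ≤ 1) (hfm : Measurable f) (hf : MemLp f 2 γ) :
    MemLp (noiseOp ρ f) 2 γ := by
  have hf2 := (memLp_two_iff_integrable_sq hfm.aestronglyMeasurable).1 hf
  rw [memLp_two_iff_integrable_sq (measurable_noiseOp hfm).aestronglyMeasurable]
  refine (integrable_noiseOp hρ (hfm.pow_const 2) hf2).mono'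
    ((measurable_noiseOp hfm).pow_const 2).aestronglyMeasurable ?_
  filter_upwards [ae_sq_noiseOp_le hρ hfm hf] with z hz
  rwa [norm_of_nonneg (sq_nonneg _)]

lemma integral_sq_noiseOp_le (hρ : |ρ| ≤ 1) (hfm : Measurable f) (hf : MemLp f 2 γ) :
    ∫ z, noiseOp ρ f z ^ 2 ∂γ ≤ ∫ z, f z ^ 2 ∂γ := by
  have hf2 := (memLp_two_iff_integrable_sq hfm.aestronglyMeasurable).1 hf
  calc ∫ z, noiseOp ρ f z ^ 2 ∂γ ≤ ∫ z, noiseOp ρ (fun x => f x ^ 2) z ∂γ :=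
        integral_mono_ae (memLp_noiseOp hρ hfm hf).integrable_sq
          (integrable_noiseOp hρ (hfm.pow_const 2) hf2) (ae_sq_noiseOp_le hρ hfm hf)
    _ = ∫ z, f z ^ 2 ∂γ := integral_noiseOp hρ (hfm.pow_const 2) hf2

lemma noiseOp_noiseOp {v w z : ℝ} (hv : |v| ≤ 1) (hw : |w| ≤ 1) (hfm : Measurable f)
    (hz : Integrable (fun y => f (v * w * z + √(1 - (v * w) ^ 2) * y)) γ) :
    noiseOp w (noiseOp v f) z = noiseOp (v * w) f z := by
  set G : ℝ → ℝ := fun t => f (v * w * z + t)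
  have hG : Measurable G := by fun_prop
  have habc : (v * √(1 - w ^ 2)) ^ 2 + √(1 - v ^ 2) ^ 2 = √(1 - (v * w) ^ 2) ^ 2 := by
    have hvw : |v * w| ≤ 1 := by rw [abs_mul]; exact mul_le_one₀ hv (abs_nonneg w) hw
    have := sq_add_sq_sqrt_one_sub_sq hv
    have := sq_add_sq_sqrt_one_sub_sq hw
    have := sq_add_sq_sqrt_one_sub_sq hvw
    linear_combination (v ^ 2) * ‹w ^ 2 + _ = 1› + ‹v ^ 2 + _ = 1› - ‹(v * w) ^ 2 + _ = 1›
  calc noiseOp w (noiseOp v f) z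
      = ∫ y, ∫ y', G (v * √(1 - w ^ 2) * y + √(1 - v ^ 2) * y') ∂γ ∂γ := by
        simp only [noiseOp, G]
        congr 1; ext y; congr 1; ext y'; ring_nf
    _ = ∫ p, G (v * √(1 - w ^ 2) * p.1 + √(1 - v ^ 2) * p.2) ∂(Measure.prod γ γ) :=
        (integral_prod _ ((integrable_linear_prod_gaussianReal_iff habc hG).2 hz)).symm
    _ = noiseOp (v * w) f z := integral_linear_prod_gaussianReal habc hG

end noiseOp

section noiseStability
variable {f : ℝ → ℝ}

lemma integral_sq_noiseOp_neg (ρ : ℝ) :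
    ∫ z, noiseOp (-ρ) f z ^ 2 ∂γ = ∫ z, noiseOp ρ f z ^ 2 ∂γ := by
  have hneg : MeasurePreserving (MeasurableEquiv.neg ℝ) γ γ :=
    ⟨measurable_neg, by simpa using gaussianReal_map_neg (μ := 0) (v := 1)⟩
  simp_rw [noiseOp_neg]
  exact hneg.integral_comp' (fun z => noiseOp ρ f z ^ 2)

lemma integral_sq_noiseOp_abs (ρ : ℝ) :
    ∫ z, noiseOp |ρ| f z ^ 2 ∂γ = ∫ z, noiseOp ρ f z ^ 2 ∂γ := by
  rcases abs_choice ρ with h | h <;> rw [h]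
  exact integral_sq_noiseOp_neg ρ

lemma monotoneOn_integral_sq_noiseOp (hfm : Measurable f) (hf : MemLp f 2 γ) :
    MonotoneOn (fun ρ => ∫ z, noiseOp ρ f z ^ 2 ∂γ) (Icc 0 1) := by
  intro u hu v hv huv
  rcases hv.1.eq_or_lt with rfl | hv0
  · obtain rfl : u = 0 := le_antisymm huv hu.1
    rfl
  have hv1 : |v| ≤ 1 := abs_le.2 ⟨by linarith [hv.1], hv.2⟩
  have hw1 : |u / v| ≤ 1 :=
    abs_le.2 ⟨by linarith [div_nonneg hu.1 hv.1], (div_le_one hv0).2 huv⟩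
  have hsemigroup : ∀ᵐ z ∂γ, noiseOp (u / v) (noiseOp v f) z = noiseOp u f z := by
    filter_upwards [ae_integrable_noise_slice (abs_le.2 ⟨by linarith [hu.1], hu.2⟩) hfm
      (hf.integrable one_le_two)] with z hz
    rw [noiseOp_noiseOp hv1 hw1 hfm (by rwa [mul_div_cancel₀ u hv0.ne']),
      mul_div_cancel₀ u hv0.ne']
  calc ∫ z, noiseOp u f z ^ 2 ∂γ = ∫ z, noiseOp (u / v) (noiseOp v f) z ^ 2 ∂γ :=
        integral_congr_ae (hsemigroup.mono fun z hz => by simp only [hz])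
    _ ≤ ∫ z, noiseOp v f z ^ 2 ∂γ :=
        integral_sq_noiseOp_le hw1 (measurable_noiseOp hfm) (memLp_noiseOp hv1 hfm hf)

end noiseStability

theorem overlap_functional_monotone_general
    (C : ℝ) (l : ℝ) (hl : l < 1 / 4)
    (h : ℝ → ℝ)
    (hdiff : ∀ j < 2, Differentiable ℝ (iteratedDeriv j h))
    (hbdd : ∀ j ≤ 2, ∀ z, |iteratedDeriv j h z| ≤ C * Real.exp (l * z ^ 2))
    (g : ℝ → ℝ)
    (hg : g = fun u =>
      ∫ z, (∫ z', h (u * z + Real.sqrt (1 - u ^ 2) * z')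
          ∂(gaussianReal 0 1)) ^ 2 ∂(gaussianReal 0 1)) :
    (∀ u ∈ Set.Icc (-1 : ℝ) 1, g (-u) = g u) ∧
    MonotoneOn g (Set.Icc (0 : ℝ) 1) ∧
    ∀ u v : ℝ, |u| ≤ |v| → |v| ≤ 1 → g u ≤ g v := by
  obtain rfl : g = fun ρ => ∫ z, noiseOp ρ h z ^ 2 ∂γ := hg
  have hm : Measurable h := by simpa using (hdiff 0 two_pos).continuous.measurable
  have hL2 : MemLp h 2 γ :=
    memLp_two_gaussianReal_of_abs_le hl hm.aestronglyMeasurable (by simpa using hbdd 0 zero_le_two)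
  have hmono := monotoneOn_integral_sq_noiseOp hm hL2
  refine ⟨fun u _ => integral_sq_noiseOp_neg u, hmono, fun u v huv hv => ?_⟩
  dsimp only
  rw [← integral_sq_noiseOp_abs u, ← integral_sq_noiseOp_abs v]
  exact hmono ⟨abs_nonneg u, huv.trans hv⟩ ⟨abs_nonneg v, hv⟩ huv

/-- Analytic core of Item 1 of Theorem 2 (case `f(t) = t²`): the functional
`g(u) = E_Z[(E_{Z'}[h(uZ + √(1−u²)Z')])²]` is even and nondecreasing on `[0,1]`;
consequently `g(u) ≤ g(v)` whenever `|u| ≤ |v| ≤ 1`. -/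
theorem overlap_functional_monotone
    (C : ℝ) (hC : 0 < C) (l : ℝ) (hl0 : 0 ≤ l) (hl : l < 1 / 4)
    (h : ℝ → ℝ)
    (hdiff : ∀ j < 2, Differentiable ℝ (iteratedDeriv j h))
    (hbdd : ∀ j ≤ 2, ∀ z, |iteratedDeriv j h z| ≤ C * Real.exp (l * z ^ 2))
    (g : ℝ → ℝ)
    (hg : g = fun u =>
      ∫ z, (∫ z', h (u * z + Real.sqrt (1 - u ^ 2) * z')
          ∂(gaussianReal 0 1)) ^ 2 ∂(gaussianReal 0 1)) :
    (∀ u ∈ Set.Icc (-1 : ℝ) 1, g (-u) = g u) ∧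
    MonotoneOn g (Set.Icc (0 : ℝ) 1) ∧
    ∀ u v : ℝ, |u| ≤ |v| → |v| ≤ 1 → g u ≤ g v :=
  overlap_functional_monotone_general C l hl h hdiff hbdd g hg
end

section
/- Let a ∈ ℝ, let Φ denote the cumulative distribution function of the standard real Gaussian measure N(0,1) (so Φ(t) = N(0,1)((−∞,t])), and let Z be distributed according to N(0,1). Then E[ Φ(a·Z)² ] = 1/4 + (1/(2π)) · arcsin( a²/(1+a²) ). -/
/-!
Both sides are smooth functions of `a` that agree at `a = 0`, where `Φ(0) = 1/2`, so it suffices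
to compare derivatives. Differentiating under the integral,
`d/da E[Φ(aZ)²] = 2 E[Z g(Z)]` with `g z = Φ(az) φ(az)`. Stein's identity `E[Z g(Z)] = E[g'(Z)]`,
together with `g' z = a φ(az)² - a² z g(z)`, gives `(1 + a²) E[Z g(Z)] = a E[φ(aZ)²]`, and the last
expectation is the Gaussian integral `1 / (2π √(1 + 2a²))`. The resulting derivative
`a / (π (1 + a²) √(1 + 2a²))` is that of `arcsin (a² / (1 + a²)) / (2π)`.
-/

open MeasureTheory ProbabilityTheory
open Real Filter Set
open scoped NNReal

lemma hasDerivAt_arcsin_sq_div_one_add_sq (a : ℝ) :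
    HasDerivAt (fun x ↦ arcsin (x ^ 2 / (1 + x ^ 2)))
      (2 * a / ((1 + a ^ 2) * √(1 + 2 * a ^ 2))) a := by
  have hpos : 0 < 1 + a ^ 2 := by positivity
  have hu : HasDerivAt (fun x ↦ x ^ 2 / (1 + x ^ 2)) (2 * a / (1 + a ^ 2) ^ 2) a :=
    ((hasDerivAt_pow 2 a).div ((hasDerivAt_pow 2 a).const_add 1) hpos.ne').congr_deriv
      (by field_simp; ring)
  have hu_lt : a ^ 2 / (1 + a ^ 2) < 1 := (div_lt_one hpos).2 (by linarith)
  have hu_gt : -1 < a ^ 2 / (1 + a ^ 2) := by linarith [show 0 ≤ a ^ 2 / (1 + a ^ 2) by positivity]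
  have hsqrt : √(1 - (a ^ 2 / (1 + a ^ 2)) ^ 2) = √(1 + 2 * a ^ 2) / (1 + a ^ 2) := by
    rw [show 1 - (a ^ 2 / (1 + a ^ 2)) ^ 2 = (1 + 2 * a ^ 2) / (1 + a ^ 2) ^ 2 by field_simp; ring,
      sqrt_div (by positivity), sqrt_sq hpos.le]
  refine ((hasDerivAt_arcsin hu_gt.ne' hu_lt.ne).comp a hu).congr_deriv ?_
  rw [hsqrt]
  field_simp

namespace ProbabilityTheory

lemma gaussianPDFReal_le_inv_sqrt (μ : ℝ) (v : ℝ≥0) (x : ℝ) :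
    gaussianPDFReal μ v x ≤ (√(2 * π * v))⁻¹ := by
  refine mul_le_of_le_one_right (by positivity) (exp_le_one_iff.2 ?_)
  exact div_nonpos_of_nonpos_of_nonneg (neg_nonpos.2 (sq_nonneg _)) (by positivity)

@[fun_prop]
lemma continuous_gaussianPDFReal (μ : ℝ) (v : ℝ≥0) : Continuous (gaussianPDFReal μ v) := by
  rw [gaussianPDFReal_def]; fun_prop

lemma hasDerivAt_gaussianPDFReal (μ : ℝ) (v : ℝ≥0) (x : ℝ) :
    HasDerivAt (gaussianPDFReal μ v) (-((x - μ) / v) * gaussianPDFReal μ v x) x := by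
  have hexp : HasDerivAt (fun y ↦ -(y - μ) ^ 2 / (2 * v)) (-((x - μ) / v)) x :=
    ((((hasDerivAt_id' x).sub_const μ).pow 2).neg.div_const (2 * (v : ℝ))).congr_deriv (by ring)
  exact (hexp.exp.const_mul (√(2 * π * v))⁻¹).congr_deriv (by rw [gaussianPDFReal]; ring)

lemma integrable_gaussianReal_iff (μ : ℝ) {v : ℝ≥0} (hv : v ≠ 0) {f : ℝ → ℝ} :
    Integrable f (gaussianReal μ v) ↔ Integrable (fun x ↦ gaussianPDFReal μ v x * f x) := by
  rw [gaussianReal_of_var_ne_zero μ hv, integrable_withDensity_iff_integrable_smul'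
    (measurable_gaussianPDF μ v) (ae_of_all _ fun _ ↦ gaussianPDF_lt_top)]
  simp only [toReal_gaussianPDF, smul_eq_mul]

theorem integral_sub_mul_gaussianReal (μ : ℝ) {v : ℝ≥0} (hv : v ≠ 0) {g g' : ℝ → ℝ}
    (hg : ∀ x, HasDerivAt g (g' x) x) (hg_int : Integrable g (gaussianReal μ v))
    (hg'_int : Integrable g' (gaussianReal μ v))
    (hxg_int : Integrable (fun x ↦ (x - μ) * g x) (gaussianReal μ v)) :
    ∫ x, (x - μ) * g x ∂gaussianReal μ v = v * ∫ x, g' x ∂gaussianReal μ v := by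
  rw [integrable_gaussianReal_iff μ hv] at hg_int hg'_int hxg_int
  have hderiv : ∀ x, HasDerivAt (fun x ↦ gaussianPDFReal μ v x * g x)
      (gaussianPDFReal μ v x * g' x - gaussianPDFReal μ v x * ((x - μ) * g x) / v) x :=
    fun x ↦ ((hasDerivAt_gaussianPDFReal μ v x).mul (hg x)).congr_deriv (by ring)
  have h := integral_eq_zero_of_hasDerivAt_of_integrable hderiv
    (hg'_int.sub (hxg_int.div_const _)) hg_int
  rw [integral_sub hg'_int (hxg_int.div_const _), integral_div, sub_eq_zero] at h
  simp only [integral_gaussianReal_eq_integral_smul hv, smul_eq_mul]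
  rw [h]
  field_simp [NNReal.coe_ne_zero.2 hv]

lemma cdf_gaussianReal_eq_integral (μ : ℝ) {v : ℝ≥0} (hv : v ≠ 0) (x : ℝ) :
    cdf (gaussianReal μ v) x = ∫ y in Iic x, gaussianPDFReal μ v y := by
  rw [cdf_eq_real, measureReal_def, gaussianReal_apply_eq_integral μ hv,
    ENNReal.toReal_ofReal (setIntegral_nonneg measurableSet_Iic
      fun y _ ↦ gaussianPDFReal_nonneg μ v y)]

lemma hasDerivAt_cdf_gaussianReal (μ : ℝ) {v : ℝ≥0} (hv : v ≠ 0) (x : ℝ) :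
    HasDerivAt (cdf (gaussianReal μ v)) (gaussianPDFReal μ v x) x := by
  have hint : ∀ t, IntegrableOn (gaussianPDFReal μ v) (Iic t) :=
    fun t ↦ (integrable_gaussianPDFReal μ v).integrableOn
  have h : ∀ t, cdf (gaussianReal μ v) 0 + ∫ y in (0)..t, gaussianPDFReal μ v y
      = cdf (gaussianReal μ v) t := fun t ↦ by
    rw [cdf_gaussianReal_eq_integral μ hv, cdf_gaussianReal_eq_integral μ hv,
      ← intervalIntegral.integral_Iic_sub_Iic (hint 0) (hint t)]
    ring
  exact (((continuous_gaussianPDFReal μ v).integral_hasStrictDerivAt 0 x).hasDerivAt.const_add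
    _).congr_of_eventuallyEq (Eventually.of_forall fun t ↦ (h t).symm)

@[fun_prop]
lemma continuous_cdf_gaussianReal (μ : ℝ) {v : ℝ≥0} (hv : v ≠ 0) :
    Continuous (cdf (gaussianReal μ v)) :=
  continuous_iff_continuousAt.2 fun x ↦ (hasDerivAt_cdf_gaussianReal μ hv x).continuousAt

lemma cdf_gaussianReal_self (μ : ℝ) {v : ℝ≥0} (hv : v ≠ 0) :
    cdf (gaussianReal μ v) μ = 1 / 2 := by
  have : NullSingletonClass (gaussianReal μ v) := nullSingletonClass_gaussianReal hv
  -- `x ↦ 2μ - x` preserves `N(μ, v)` and exchanges `Iic μ` and `Ici μ`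
  have hsymm : (gaussianReal μ v).real (Iic μ) = (gaussianReal μ v).real (Ioi μ) := by
    have h := gaussianReal_map_const_sub (μ := μ) (v := v) (2 * μ)
    rw [show 2 * μ - μ = μ by ring] at h
    rw [measureReal_congr Ioi_ae_eq_Ici]
    conv_lhs => rw [← h, map_measureReal_apply (by fun_prop) measurableSet_Iic]
    congr 1
    ext x
    simp only [mem_preimage, mem_Iic, mem_Ici]
    constructor <;> intro <;> linarith
  have hsum :=
    measureReal_add_measureReal_compl (μ := gaussianReal μ v) (measurableSet_Iic (a := μ))
  rw [compl_Iic, ← hsymm, probReal_univ] at hsum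
  rw [cdf_eq_real]
  linarith

lemma abs_cdf_mul_gaussianPDFReal_le (μ : ℝ) (v : ℝ≥0) (x : ℝ) :
    |cdf (gaussianReal μ v) x * gaussianPDFReal μ v x| ≤ (√(2 * π * v))⁻¹ := by
  rw [abs_of_nonneg (mul_nonneg (cdf_nonneg _ x) (gaussianPDFReal_nonneg μ v x))]
  exact (mul_le_of_le_one_left (gaussianPDFReal_nonneg μ v x) (cdf_le_one _ x)).trans
    (gaussianPDFReal_le_inv_sqrt μ v x)

lemma integrable_mul_gaussianReal_of_abs_le (μ : ℝ) (v : ℝ≥0) {f : ℝ → ℝ} (hf : Continuous f)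
    {C : ℝ} (hC : ∀ x, |f x| ≤ C) : Integrable (fun x ↦ x * f x) (gaussianReal μ v) := by
  refine (((memLp_id_gaussianReal 1).integrable le_rfl).norm.mul_const C).mono'
    (by fun_prop) (ae_of_all _ fun x ↦ ?_)
  rw [norm_mul, id, Real.norm_eq_abs]
  exact mul_le_mul_of_nonneg_left (by simpa using hC x) (abs_nonneg x)

section Standard

local notation "φ" => gaussianPDFReal 0 1
local notation "Φ" => cdf (gaussianReal 0 1)

lemma gaussianPDFReal_zero_one (x : ℝ) : φ x = (√(2 * π))⁻¹ * exp (-x ^ 2 / 2) := by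
  simp [gaussianPDFReal]

lemma integral_gaussianPDFReal_mul_sq (a : ℝ) :
    ∫ z, φ (a * z) ^ 2 ∂gaussianReal 0 1 = 1 / (2 * π * √(1 + 2 * a ^ 2)) := by
  have h : ∀ z, φ z * φ (a * z) ^ 2 = (√(2 * π))⁻¹ ^ 3 * exp (-(a ^ 2 + 1 / 2) * z ^ 2) := by
    intro z
    have hexp :
        exp (-z ^ 2 / 2) * exp (-(a * z) ^ 2 / 2) ^ 2 = exp (-(a ^ 2 + 1 / 2) * z ^ 2) := by
      rw [← exp_nat_mul, ← exp_add]
      ring_nf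
    rw [gaussianPDFReal_zero_one, gaussianPDFReal_zero_one]
    linear_combination (√(2 * π))⁻¹ ^ 3 * hexp
  simp only [integral_gaussianReal_eq_integral_smul one_ne_zero, smul_eq_mul, h,
    integral_const_mul, integral_gaussian]
  have hπ : π / (a ^ 2 + 1 / 2) = 2 * π / (1 + 2 * a ^ 2) := by field_simp; ring
  rw [hπ, sqrt_div (by positivity)]
  set s := √(2 * π) with hs
  have hs_pos : 0 < s := by positivity
  rw [show 2 * π = s ^ 2 by rw [hs, sq_sqrt (by positivity)]]
  field_simp

lemma integral_mul_cdf_mul_gaussianPDFReal (a : ℝ) :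
    ∫ z, z * (Φ (a * z) * φ (a * z)) ∂gaussianReal 0 1
      = a / ((1 + a ^ 2) * (2 * π * √(1 + 2 * a ^ 2))) := by
  set g : ℝ → ℝ := fun z ↦ Φ (a * z) * φ (a * z) with hg
  have hg_cont : Continuous g := by fun_prop (disch := simp)
  have hg_le : ∀ z, |g z| ≤ (√(2 * π))⁻¹ := fun z ↦ by
    simpa [hg, abs_mul] using abs_cdf_mul_gaussianPDFReal_le 0 1 (a * z)
  have hg_int : Integrable g (gaussianReal 0 1) :=
    .of_bound hg_cont.aestronglyMeasurable _ (ae_of_all _ hg_le)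
  have hzg_int : Integrable (fun z ↦ z * g z) (gaussianReal 0 1) :=
    integrable_mul_gaussianReal_of_abs_le 0 1 hg_cont hg_le
  have hsq_int : Integrable (fun z ↦ φ (a * z) ^ 2) (gaussianReal 0 1) := by
    refine .of_bound (by fun_prop (disch := simp)) ((√(2 * π))⁻¹ ^ 2) (ae_of_all _ fun z ↦ ?_)
    rw [norm_pow, Real.norm_eq_abs, abs_of_nonneg (gaussianPDFReal_nonneg 0 1 _)]
    exact pow_le_pow_left₀ (gaussianPDFReal_nonneg 0 1 _)
      (by simpa using gaussianPDFReal_le_inv_sqrt 0 1 (a * z)) 2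
  have hg_deriv : ∀ z, HasDerivAt g (a * φ (a * z) ^ 2 - a ^ 2 * (z * g z)) z := fun z ↦ by
    have hlin := (hasDerivAt_id' z).const_mul a
    exact (((hasDerivAt_cdf_gaussianReal 0 one_ne_zero (a * z)).comp z hlin).mul
      ((hasDerivAt_gaussianPDFReal 0 1 (a * z)).comp z hlin)).congr_deriv
      (by simp only [Function.comp_apply, NNReal.coe_one, sub_zero, div_one]; ring)
  have hstein := integral_sub_mul_gaussianReal 0 one_ne_zero hg_deriv hg_int
    ((hsq_int.const_mul a).sub (hzg_int.const_mul _)) (by simpa using hzg_int)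
  simp only [sub_zero, NNReal.coe_one, one_mul] at hstein
  rw [integral_sub (hsq_int.const_mul a) (hzg_int.const_mul _), integral_const_mul,
    integral_const_mul, integral_gaussianPDFReal_mul_sq] at hstein
  change ∫ z, z * g z ∂gaussianReal 0 1 = _
  have h : (∫ z, z * g z ∂gaussianReal 0 1) * (1 + a ^ 2)
      = a * (1 / (2 * π * √(1 + 2 * a ^ 2))) := by
    linear_combination hstein
  rw [eq_div_iff (by positivity), ← mul_assoc, h]
  field_simp

lemma hasDerivAt_integral_cdf_mul_sq (a : ℝ) :
    HasDerivAt (fun x ↦ ∫ z, Φ (x * z) ^ 2 ∂gaussianReal 0 1)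
      (a / (π * (1 + a ^ 2) * √(1 + 2 * a ^ 2))) a := by
  have hderiv : ∀ x z, HasDerivAt (fun x ↦ Φ (x * z) ^ 2) (2 * (z * (Φ (x * z) * φ (x * z)))) x :=
    fun x z ↦ (((hasDerivAt_cdf_gaussianReal 0 one_ne_zero (x * z)).comp x
      (hasDerivAt_mul_const z)).pow 2).congr_deriv (by simp only [Function.comp_apply]; ring)
  have hF_int : Integrable (fun z ↦ Φ (a * z) ^ 2) (gaussianReal 0 1) := by
    refine .of_bound (by fun_prop (disch := simp)) 1 (ae_of_all _ fun z ↦ ?_)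
    rw [norm_pow, Real.norm_eq_abs, abs_of_nonneg (cdf_nonneg _ _)]
    exact pow_le_one₀ (cdf_nonneg _ _) (cdf_le_one _ _)
  have hF'_le : ∀ x z, ‖2 * (z * (Φ (x * z) * φ (x * z)))‖ ≤ 2 * ((√(2 * π))⁻¹ * |z|) := by
    intro x z
    rw [norm_mul, norm_mul, Real.norm_eq_abs, Real.norm_eq_abs, Real.norm_eq_abs, abs_two,
      mul_comm |z|]
    gcongr
    simpa using abs_cdf_mul_gaussianPDFReal_le 0 1 (x * z)
  obtain ⟨-, h⟩ := hasDerivAt_integral_of_dominated_loc_of_deriv_le univ_mem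
    (.of_forall fun x ↦ by fun_prop (disch := simp)) hF_int (by fun_prop (disch := simp))
    (ae_of_all _ fun z x _ ↦ hF'_le x z)
    (((memLp_id_gaussianReal 1).integrable le_rfl).abs.const_mul _ |>.const_mul 2)
    (ae_of_all _ fun z x _ ↦ hderiv x z)
  rw [integral_const_mul, integral_mul_cdf_mul_gaussianPDFReal] at h
  exact h.congr_deriv (by field_simp)

end Standard

end ProbabilityTheory

/-- Owen's formula 2,010.3: for `Z ∼ N(0,1)` and `Φ` the standard Gaussian CDF,
`E[Φ(aZ)²] = 1/4 + (1/(2π)) arcsin(a²/(1+a²))`. -/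
theorem gaussian_cdf_sq_moment
    (a : ℝ) (Φ : ℝ → ℝ)
    (hΦ : Φ = fun t => ((gaussianReal 0 1) (Set.Iic t)).toReal) :
    ∫ z, (Φ (a * z)) ^ 2 ∂(gaussianReal 0 1)
      = 1 / 4 + (1 / (2 * Real.pi)) * Real.arcsin (a ^ 2 / (1 + a ^ 2)) := by
  obtain rfl : Φ = cdf (gaussianReal 0 1) := by
    ext t
    rw [hΦ, cdf_eq_real, measureReal_def]
  have hG : ∀ x : ℝ, HasDerivAt (fun x ↦ 1 / 4 + 1 / (2 * π) * arcsin (x ^ 2 / (1 + x ^ 2)))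
      (x / (π * (1 + x ^ 2) * √(1 + 2 * x ^ 2))) x := fun x ↦
    (((hasDerivAt_arcsin_sq_div_one_add_sq x).const_mul _).const_add _).congr_deriv
      (by field_simp)
  refine congrFun (eq_of_fderiv_eq (𝕜 := ℝ)
    (fun x ↦ (hasDerivAt_integral_cdf_mul_sq x).differentiableAt)
    (fun x ↦ (hG x).differentiableAt)
    (fun x ↦ (hasDerivAt_integral_cdf_mul_sq x).hasFDerivAt.fderiv.trans
      (hG x).hasFDerivAt.fderiv.symm) 0 ?_) a
  norm_num [cdf_gaussianReal_self 0 one_ne_zero]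
end

section
/- Let u ∈ (−1,1), set a := u/sqrt(1−u²), let φ(t) := (2π)^{−1/2}·exp(−t²/2) be the standard Gaussian density, let Φ(t) := N(0,1)((−∞,t]) be the standard Gaussian cumulative distribution function, and let Z be distributed according to the real Gaussian measure N(0,1). Then 2π · E[ ( sqrt(1−u²)·φ(a·Z) + u·Z·Φ(a·Z) )² ] = sqrt(1 − u⁴) + (π/2)·u² + u²·arcsin(u²). Moreover, the function w ↦ sqrt(1−w²) + (π/2)·w + w·arcsin(w) is strictly increasing on [0,1]. -/
/-!
Put `A = E[φ(aZ)²]`, `B = E[Z φ(aZ) Φ(aZ)]`, `C = E[Φ(aZ)²]`, `D = E[Z² Φ(aZ)²]`, so that the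
expectation is `S² A + 2 S u B + u² D` with `S = √(1 - u²)`. `A` is a Gaussian integral, and
Stein's identity `E[Z g(Z)] = E[g'(Z)]` gives `(1 + a²) B = a A` and `D = C + 2 a B`.
Differentiating under the integral, `C' = 2 B`, which is also the derivative of
`arcsin (a² / (1 + a²)) / (2π)`; since `C(0) = Φ(0)² = 1/4`, this determines `C`.
For `a = u / S` one has `a² / (1 + a²) = u²`, and the remaining terms collapse to `√(1 - u⁴)`.
Monotonicity: `√(1 - w²) + w arcsin w` is an antiderivative of `arcsin`, so the derivative
`π/2 + arcsin w` is positive on `(0, 1)`.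
-/

open MeasureTheory ProbabilityTheory Real Set Filter

namespace StdGaussian

local notation "γ" => gaussianReal 0 1
local notation "φ" => gaussianPDFReal 0 1
local notation "Φ" => cdf (gaussianReal 0 1)

lemma pdf_eq (x : ℝ) : φ x = (√(2 * π))⁻¹ * exp (-x ^ 2 / 2) := by
  simp [gaussianPDFReal]

lemma norm_pdf_le_one (x : ℝ) : ‖φ x‖ ≤ 1 := by
  rw [Real.norm_of_nonneg (gaussianPDFReal_nonneg 0 1 x), pdf_eq]
  refine mul_le_one₀ (inv_le_one_of_one_le₀ ?_) (exp_nonneg _) (exp_le_one_iff.mpr (by nlinarith))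
  exact one_le_sqrt.mpr (by nlinarith [pi_gt_three])

lemma norm_cdf_le_one (x : ℝ) : ‖Φ x‖ ≤ 1 := by
  rw [Real.norm_of_nonneg (cdf_nonneg _ x)]
  exact cdf_le_one _ x

@[fun_prop]
lemma continuous_pdf : Continuous φ := by
  simp_rw [funext pdf_eq]; fun_prop

lemma hasDerivAt_pdf (x : ℝ) : HasDerivAt φ (-x * φ x) x := by
  simp_rw [funext pdf_eq]
  have hexp := ((hasDerivAt_pow 2 x).neg).div_const 2
  simp only [Pi.neg_apply, Nat.cast_ofNat, Nat.add_one_sub_one, pow_one] at hexp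
  exact (hexp.exp.const_mul _).congr_deriv (by ring)

lemma cdf_eq_setIntegral (x : ℝ) : Φ x = ∫ z in Iic x, φ z := by
  rw [cdf_eq_real, measureReal_def, gaussianReal_apply_eq_integral 0 one_ne_zero,
    ENNReal.toReal_ofReal (setIntegral_nonneg measurableSet_Iic fun z _ =>
      gaussianPDFReal_nonneg 0 1 z)]

lemma hasDerivAt_cdf (x : ℝ) : HasDerivAt Φ (φ x) x := by
  have hint := integrable_gaussianPDFReal 0 1
  have hΦ : ∀ y, Φ y = Φ 0 + ∫ z in (0 : ℝ)..y, φ z := fun y => by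
    rw [cdf_eq_setIntegral, cdf_eq_setIntegral,
      ← intervalIntegral.integral_Iic_sub_Iic hint.integrableOn hint.integrableOn]
    ring
  rw [funext hΦ]
  exact (continuous_pdf.integral_hasStrictDerivAt 0 x).hasDerivAt.const_add _

@[fun_prop]
lemma continuous_cdf : Continuous Φ :=
  continuous_iff_continuousAt.mpr fun x => (hasDerivAt_cdf x).continuousAt

lemma cdf_zero : Φ 0 = 1 / 2 := by
  have hint := integrable_gaussianPDFReal 0 1
  have hIoi : ∫ z in Ioi (0 : ℝ), φ z = 1 / 2 := by
    have hexp : ∀ z : ℝ, exp (-z ^ 2 / 2) = exp (-(1 / 2) * z ^ 2) := fun z => by ring_nf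
    simp_rw [pdf_eq, hexp, integral_const_mul, integral_gaussian_Ioi,
      div_div_eq_mul_div, div_one, mul_comm π 2]
    field_simp
  have hsum := setIntegral_union (Iic_disjoint_Ioi (le_refl (0 : ℝ))) measurableSet_Ioi
    hint.integrableOn hint.integrableOn
  rw [Iic_union_Ioi, setIntegral_univ, integral_gaussianPDFReal_eq_one 0 one_ne_zero, hIoi] at hsum
  rw [cdf_eq_setIntegral]
  linarith

lemma integral_eq_integral_mul_pdf (f : ℝ → ℝ) : ∫ z, f z ∂γ = ∫ z, f z * φ z := by
  simp [integral_gaussianReal_eq_integral_smul one_ne_zero, mul_comm]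

lemma integrable_iff_integrable_mul_pdf {f : ℝ → ℝ} :
    Integrable f γ ↔ Integrable fun z => f z * φ z := by
  rw [gaussianReal_of_var_ne_zero 0 one_ne_zero, integrable_withDensity_iff_integrable_smul'
    (measurable_gaussianPDF 0 1) (ae_of_all _ fun _ => gaussianPDF_lt_top)]
  simp [toReal_gaussianPDF, mul_comm]

lemma integrable_pow (k : ℕ) : Integrable (fun z : ℝ => z ^ k) γ :=
  integrable_pow_of_mem_interior_integrableExpSet (by simp) k

lemma integrable_pow_mul_of_norm_le {h : ℝ → ℝ} (k : ℕ) (hh : AEStronglyMeasurable h γ) {C : ℝ}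
    (hC : ∀ z, ‖h z‖ ≤ C) : Integrable (fun z => z ^ k * h z) γ :=
  (integrable_pow k).mul_bdd hh (ae_of_all _ hC)

/-- **Stein's lemma** (Gaussian integration by parts). -/
theorem integral_mul_eq_integral_deriv_s18 {g g' : ℝ → ℝ} (hg : ∀ z, HasDerivAt g (g' z) z)
    (hg_int : Integrable g γ) (hzg_int : Integrable (fun z => z * g z) γ)
    (hg'_int : Integrable g' γ) :
    ∫ z, z * g z ∂γ = ∫ z, g' z ∂γ := by
  rw [integrable_iff_integrable_mul_pdf] at hg_int hzg_int hg'_int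
  have hparts := integral_mul_deriv_eq_deriv_mul_of_integrable (u := g) (v := φ)
    (v' := fun z => -z * φ z) (fun z _ => hg z) (fun z _ => hasDerivAt_pdf z)
    (by simpa [Pi.mul_def, mul_assoc, mul_comm, mul_left_comm] using hzg_int.neg) hg'_int hg_int
  rw [integral_eq_integral_mul_pdf, integral_eq_integral_mul_pdf, ← neg_eq_iff_eq_neg.mpr hparts,
    ← integral_neg]
  congr 1 with z
  ring

section Scaled

variable (a : ℝ)

lemma integrable_pow_mul_pdf_comp_mul_sq (k : ℕ) :
    Integrable (fun z => z ^ k * φ (a * z) ^ 2) γ :=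
  integrable_pow_mul_of_norm_le k (by fun_prop) fun z => by
    rw [norm_pow]; exact pow_le_one₀ (norm_nonneg _) (norm_pdf_le_one _)

lemma integrable_pow_mul_pdf_mul_cdf_comp_mul (k : ℕ) :
    Integrable (fun z => z ^ k * (φ (a * z) * Φ (a * z))) γ :=
  integrable_pow_mul_of_norm_le k (by fun_prop) fun z => by
    rw [norm_mul]; exact mul_le_one₀ (norm_pdf_le_one _) (norm_nonneg _) (norm_cdf_le_one _)

lemma integrable_pow_mul_cdf_comp_mul_sq (k : ℕ) :
    Integrable (fun z => z ^ k * Φ (a * z) ^ 2) γ :=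
  integrable_pow_mul_of_norm_le k (by fun_prop) fun z => by
    rw [norm_pow]; exact pow_le_one₀ (norm_nonneg _) (norm_cdf_le_one _)

lemma integral_pdf_comp_mul_sq : ∫ z, φ (a * z) ^ 2 ∂γ = (2 * π * √(1 + 2 * a ^ 2))⁻¹ := by
  have hexp : ∀ z,
      φ (a * z) ^ 2 * φ z = (√(2 * π))⁻¹ ^ 3 * exp (-((1 + 2 * a ^ 2) / 2) * z ^ 2) := fun z => by
    simp only [pdf_eq, mul_pow, ← exp_nat_mul]
    rw [show (√(2 * π))⁻¹ ^ 3 = (√(2 * π))⁻¹ ^ 2 * (√(2 * π))⁻¹ by ring, mul_mul_mul_comm,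
      ← exp_add]
    congr 2
    push_cast; ring
  have h2π : √(2 * π) ^ 2 = 2 * π := sq_sqrt (by positivity)
  rw [integral_eq_integral_mul_pdf, funext hexp, integral_const_mul, integral_gaussian,
    div_div_eq_mul_div, mul_comm π 2, sqrt_div' _ (by positivity)]
  field_simp
  rw [h2π]

lemma hasDerivAt_pdf_comp_mul (z : ℝ) :
    HasDerivAt (fun z => φ (a * z)) (-(a ^ 2 * z) * φ (a * z)) z :=
  ((hasDerivAt_pdf (a * z)).comp z ((hasDerivAt_id z).const_mul a)).congr_deriv (by ring)

lemma hasDerivAt_cdf_comp_mul (z : ℝ) : HasDerivAt (fun z => Φ (a * z)) (a * φ (a * z)) z :=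
  ((hasDerivAt_cdf (a * z)).comp z ((hasDerivAt_id z).const_mul a)).congr_deriv (by ring)

lemma integral_id_mul_pdf_mul_cdf_comp_mul :
    ∫ z, z * (φ (a * z) * Φ (a * z)) ∂γ = a / (1 + a ^ 2) * (2 * π * √(1 + 2 * a ^ 2))⁻¹ := by
  have hg : Integrable (fun z => φ (a * z) * Φ (a * z)) γ := by
    simpa using integrable_pow_mul_pdf_mul_cdf_comp_mul a 0
  have hzg : Integrable (fun z => z * (φ (a * z) * Φ (a * z))) γ := by
    simpa using integrable_pow_mul_pdf_mul_cdf_comp_mul a 1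
  have hsq : Integrable (fun z => φ (a * z) ^ 2) γ := by
    simpa using integrable_pow_mul_pdf_comp_mul_sq a 0
  have hstein := integral_mul_eq_integral_deriv_s18 (g := fun z => φ (a * z) * Φ (a * z))
    (fun z => ((hasDerivAt_pdf_comp_mul a z).mul (hasDerivAt_cdf_comp_mul a z)).congr_deriv
      (by ring : _ = -a ^ 2 * (z * (φ (a * z) * Φ (a * z))) + a * φ (a * z) ^ 2))
    hg hzg ((hzg.const_mul _).add (hsq.const_mul _))
  rw [integral_add (hzg.const_mul _) (hsq.const_mul _), integral_const_mul, integral_const_mul,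
    integral_pdf_comp_mul_sq] at hstein
  rw [div_mul_eq_mul_div, eq_div_iff (by positivity)]
  linear_combination hstein

lemma integral_sq_mul_cdf_comp_mul_sq :
    ∫ z, z ^ 2 * Φ (a * z) ^ 2 ∂γ
      = ∫ z, Φ (a * z) ^ 2 ∂γ + 2 * a * ∫ z, z * (φ (a * z) * Φ (a * z)) ∂γ := by
  have hg : Integrable (fun z => z * Φ (a * z) ^ 2) γ := by
    simpa using integrable_pow_mul_cdf_comp_mul_sq a 1
  have hsq : Integrable (fun z => Φ (a * z) ^ 2) γ := by
    simpa using integrable_pow_mul_cdf_comp_mul_sq a 0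
  have hzφΦ : Integrable (fun z => z * (φ (a * z) * Φ (a * z))) γ := by
    simpa using integrable_pow_mul_pdf_mul_cdf_comp_mul a 1
  have hstein := integral_mul_eq_integral_deriv_s18 (g := fun z => z * Φ (a * z) ^ 2)
    (g' := fun z => Φ (a * z) ^ 2 + 2 * a * (z * (φ (a * z) * Φ (a * z))))
    (fun z => ((hasDerivAt_id z).mul ((hasDerivAt_cdf_comp_mul a z).pow 2)).congr_deriv
      (by simp only [id, Pi.pow_apply, Nat.cast_ofNat]; ring))
    hg (by simpa [← mul_assoc, ← sq] using integrable_pow_mul_cdf_comp_mul_sq a 2)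
    (hsq.add (hzφΦ.const_mul _))
  rw [integral_add hsq (hzφΦ.const_mul _), integral_const_mul] at hstein
  simpa [← mul_assoc, ← sq] using hstein

lemma hasDerivAt_integral_cdf_comp_mul_sq :
    HasDerivAt (fun b => ∫ z, Φ (b * z) ^ 2 ∂γ) (2 * ∫ z, z * (φ (a * z) * Φ (a * z)) ∂γ) a := by
  rw [← integral_const_mul]
  refine (hasDerivAt_integral_of_dominated_loc_of_deriv_le (bound := fun z => 2 * |z|)
    (F' := fun b z => 2 * (z * (φ (b * z) * Φ (b * z)))) univ_mem
    (Eventually.of_forall fun b => (by fun_prop : Continuous _).aestronglyMeasurable)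
    (by simpa using integrable_pow_mul_cdf_comp_mul_sq a 0)
    (by fun_prop : Continuous _).aestronglyMeasurable
    (ae_of_all _ fun z b _ => ?_) ?_ (ae_of_all _ fun z b _ => ?_)).2
  · rw [norm_mul, norm_mul, Real.norm_two, Real.norm_eq_abs z, norm_mul]
    have := mul_le_one₀ (norm_pdf_le_one (b * z)) (norm_nonneg _) (norm_cdf_le_one (b * z))
    have := abs_nonneg z
    nlinarith
  · simpa using ((integrable_pow 1).norm.const_mul 2)
  · have hmul : HasDerivAt (fun b => b * z) z b := by simpa using (hasDerivAt_id b).mul_const z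
    exact (((hasDerivAt_cdf (b * z)).comp b hmul).pow 2).congr_deriv
      (by simp only [Function.comp_apply, Nat.cast_ofNat]; ring)

lemma hasDerivAt_arcsin_sq_div_one_add_sq :
    HasDerivAt (fun b => arcsin (b ^ 2 / (1 + b ^ 2)))
      (2 * a / ((1 + a ^ 2) * √(1 + 2 * a ^ 2))) a := by
  have h1 : (0 : ℝ) < 1 + a ^ 2 := by positivity
  have hratio : HasDerivAt (fun b => b ^ 2 / (1 + b ^ 2)) (2 * a / (1 + a ^ 2) ^ 2) a :=
    ((hasDerivAt_pow 2 a).div ((hasDerivAt_pow 2 a).const_add 1) h1.ne').congr_deriv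
    (by push_cast; ring)
  have hlt : a ^ 2 / (1 + a ^ 2) < 1 := (div_lt_one h1).mpr (by linarith)
  have hgt : -1 < a ^ 2 / (1 + a ^ 2) := by linarith [show 0 ≤ a ^ 2 / (1 + a ^ 2) by positivity]
  have hsqrt : √(1 - (a ^ 2 / (1 + a ^ 2)) ^ 2) = √(1 + 2 * a ^ 2) / (1 + a ^ 2) := by
    rw [show 1 - (a ^ 2 / (1 + a ^ 2)) ^ 2 = (1 + 2 * a ^ 2) / (1 + a ^ 2) ^ 2 by
      field_simp; ring, sqrt_div' _ (sq_nonneg _), sqrt_sq h1.le]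
  refine ((hasDerivAt_arcsin hgt.ne' hlt.ne).comp a hratio).congr_deriv ?_
  rw [hsqrt]
  field_simp

lemma integral_cdf_comp_mul_sq :
    ∫ z, Φ (a * z) ^ 2 ∂γ = 1 / 4 + arcsin (a ^ 2 / (1 + a ^ 2)) / (2 * π) := by
  have hderiv : ∀ b : ℝ, HasDerivAt
      (fun b => ∫ z, Φ (b * z) ^ 2 ∂γ - arcsin (b ^ 2 / (1 + b ^ 2)) / (2 * π)) 0 b := fun b => by
    refine ((hasDerivAt_integral_cdf_comp_mul_sq b).sub
      ((hasDerivAt_arcsin_sq_div_one_add_sq b).div_const _)).congr_deriv ?_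
    rw [integral_id_mul_pdf_mul_cdf_comp_mul]
    field_simp
    ring
  have hconst := is_const_of_deriv_eq_zero (fun b => (hderiv b).differentiableAt)
    (fun b => (hderiv b).deriv) a 0
  norm_num [cdf_zero] at hconst
  linarith

lemma integral_sq_pdf_add_id_mul_cdf_comp_mul (S u : ℝ) :
    ∫ z, (S * φ (a * z) + u * z * Φ (a * z)) ^ 2 ∂γ
      = S ^ 2 * ∫ z, φ (a * z) ^ 2 ∂γ + 2 * S * u * ∫ z, z * (φ (a * z) * Φ (a * z)) ∂γ
        + u ^ 2 * ∫ z, z ^ 2 * Φ (a * z) ^ 2 ∂γ := by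
  have hA := (integrable_pow_mul_pdf_comp_mul_sq a 0).const_mul (S ^ 2)
  have hB := (integrable_pow_mul_pdf_mul_cdf_comp_mul a 1).const_mul (2 * S * u)
  have hD := (integrable_pow_mul_cdf_comp_mul_sq a 2).const_mul (u ^ 2)
  simp only [pow_zero, one_mul, pow_one] at hA hB
  calc ∫ z, (S * φ (a * z) + u * z * Φ (a * z)) ^ 2 ∂γ
      = ∫ z, S ^ 2 * φ (a * z) ^ 2 + 2 * S * u * (z * (φ (a * z) * Φ (a * z)))
          + u ^ 2 * (z ^ 2 * Φ (a * z) ^ 2) ∂γ := by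
        congr 1 with z; ring
    _ = _ := by
        rw [integral_add _ hD, integral_add hA hB, integral_const_mul, integral_const_mul,
          integral_const_mul]
        exact hA.add hB

end Scaled

theorem two_pi_mul_integral_sq_pdf_add_id_mul_cdf_comp_mul {u : ℝ} (hu : u ∈ Ioo (-1 : ℝ) 1) :
    2 * π * ∫ z, (√(1 - u ^ 2) * φ (u / √(1 - u ^ 2) * z)
        + u * z * Φ (u / √(1 - u ^ 2) * z)) ^ 2 ∂γ
      = √(1 - u ^ 4) + π / 2 * u ^ 2 + u ^ 2 * arcsin (u ^ 2) := by
  have hpos : 0 < 1 - u ^ 2 := by nlinarith [hu.1, hu.2]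
  set S := √(1 - u ^ 2) with hS_def
  set a := u / S with ha_def
  set P := √(1 + u ^ 2) with hP_def
  have hS : 0 < S := sqrt_pos.mpr hpos
  have hS2 : S ^ 2 = 1 - u ^ 2 := sq_sqrt hpos.le
  have hP : 0 < P := sqrt_pos.mpr (by positivity)
  have hP2 : P ^ 2 = 1 + u ^ 2 := sq_sqrt (by positivity)
  have h1a : 1 + a ^ 2 = (S ^ 2)⁻¹ := by
    rw [ha_def]; field_simp; linarith
  have hratio : a ^ 2 / (1 + a ^ 2) = u ^ 2 := by
    rw [h1a, ha_def]; field_simp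
  have hfrac : a / (1 + a ^ 2) = u * S := by
    rw [h1a, ha_def]; field_simp
  have hsqrt : √(1 + 2 * a ^ 2) = P / S := by
    rw [← sqrt_sq hS.le, ← sqrt_div' _ (sq_nonneg _)]
    congr 1
    rw [ha_def]; field_simp; linarith
  have h4 : √(1 - u ^ 4) = P * S := by
    rw [← sqrt_mul (by positivity)]; congr 1; ring
  rw [integral_sq_pdf_add_id_mul_cdf_comp_mul, integral_sq_mul_cdf_comp_mul_sq,
    integral_pdf_comp_mul_sq, integral_id_mul_pdf_mul_cdf_comp_mul, integral_cdf_comp_mul_sq,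
    hratio, hfrac, hsqrt, h4, ha_def]
  field_simp
  linear_combination (-8 * S) * hP2 + 8 * S * (1 + 2 * u ^ 2) * hS2

end StdGaussian

lemma hasDerivAt_sqrt_one_sub_sq_add_mul_arcsin {w : ℝ} (hw : w ∈ Ioo (-1 : ℝ) 1) :
    HasDerivAt (fun w => √(1 - w ^ 2) + w * arcsin w) (arcsin w) w := by
  have hpos : 0 < 1 - w ^ 2 := by nlinarith [hw.1, hw.2]
  have hsqrt := ((hasDerivAt_pow 2 w).const_sub 1).sqrt hpos.ne'
  refine (hsqrt.add ((hasDerivAt_id w).mul (hasDerivAt_arcsin hw.1.ne' hw.2.ne))).congr_deriv ?_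
  have hsqrt_ne : √(1 - w ^ 2) ≠ 0 := (sqrt_pos.mpr hpos).ne'
  simp only [Nat.cast_ofNat, Nat.add_one_sub_one, pow_one, id_eq]
  field_simp
  ring

lemma strictMonoOn_sqrt_one_sub_sq_add_mul_add_mul_arcsin :
    StrictMonoOn (fun w => √(1 - w ^ 2) + (π / 2) * w + w * arcsin w) (Icc 0 1) := by
  have hfun : (fun w => √(1 - w ^ 2) + (π / 2) * w + w * arcsin w)
      = fun w => (√(1 - w ^ 2) + w * arcsin w) + π / 2 * w := by
    ext w; ring
  rw [hfun]
  refine strictMonoOn_of_hasDerivWithinAt_pos (f' := fun w => arcsin w + π / 2) (convex_Icc 0 1)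
    (by fun_prop) (fun w hw => ?_) (fun w hw => ?_) <;> rw [interior_Icc] at hw
  · have hIoo : w ∈ Ioo (-1 : ℝ) 1 := ⟨by linarith [hw.1], hw.2⟩
    exact ((hasDerivAt_sqrt_one_sub_sq_add_mul_arcsin hIoo).add
      ((hasDerivAt_id w).const_mul (π / 2))).hasDerivWithinAt.congr_deriv (by ring)
  · linarith [arcsin_pos.mpr hw.1, pi_pos]

/-- Closed-form overlap divergence for the ReLU link (Theorem 2, part 2.(a)(iii)):
with `a = u/√(1−u²)`, `φ` the standard Gaussian density and `Φ` its CDF,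
`2π·E[(√(1−u²)φ(aZ) + uZΦ(aZ))²] = √(1−u⁴) + (π/2)u² + u²·arcsin(u²)`, and
`w ↦ √(1−w²) + (π/2)w + w·arcsin(w)` is strictly increasing on `[0,1]`. -/
theorem relu_overlap_divergence_closed_form
    (u : ℝ) (hu : u ∈ Set.Ioo (-1 : ℝ) 1)
    (a : ℝ) (ha : a = u / Real.sqrt (1 - u ^ 2))
    (φ Φ : ℝ → ℝ)
    (hφ : φ = fun t => (Real.sqrt (2 * Real.pi))⁻¹ * Real.exp (-t ^ 2 / 2))
    (hΦ : Φ = fun t => ((gaussianReal 0 1) (Set.Iic t)).toReal) :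
    (2 * Real.pi
        * ∫ z, (Real.sqrt (1 - u ^ 2) * φ (a * z) + u * z * Φ (a * z)) ^ 2
            ∂(gaussianReal 0 1)
      = Real.sqrt (1 - u ^ 4) + (Real.pi / 2) * u ^ 2
        + u ^ 2 * Real.arcsin (u ^ 2)) ∧
    StrictMonoOn
      (fun w : ℝ => Real.sqrt (1 - w ^ 2) + (Real.pi / 2) * w + w * Real.arcsin w)
      (Set.Icc (0 : ℝ) 1) := by
  obtain rfl : φ = gaussianPDFReal 0 1 := hφ.trans (funext fun t => (StdGaussian.pdf_eq t).symm)
  obtain rfl : Φ = cdf (gaussianReal 0 1) := hΦ.trans (funext fun t => (cdf_eq_real _ t).symm)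
  subst ha
  exact ⟨StdGaussian.two_pi_mul_integral_sq_pdf_add_id_mul_cdf_comp_mul hu,
    strictMonoOn_sqrt_one_sub_sq_add_mul_add_mul_arcsin⟩
end
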